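/- arXiv:1301.6332 — 10 statements merged into one kernel-verified Lean document; each statement's English description precedes it below -/
import Mathlib

section
/- Let R be a commutative ring, n a positive integer, and p ∈ R[X] a monic polynomial of degree n. Then the intersection, over all matrices M ∈ Mₙ(R) whose characteristic polynomial equals p, of the null ideals N_{R[X]}(M) = {g ∈ R[X] : g(M) = 0} is exactly the principal ideal of R[X] generated by p. -/
open Polynomial

/-!
Every null ideal of a matrix `M` contains `(M.charpoly)` by Cayley–Hamilton, so the intersection
contains `(p)`. Conversely, left multiplication by `root p` on `AdjoinRoot p`, written in the power
basis `1, root p, …, root p ^ (n - 1)`, is a matrix with characteristic polynomial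
`minpoly R (root p) = p` whose null ideal is the kernel of `R[X] → AdjoinRoot p`, namely `(p)`.
-/
theorem AdjoinRoot.ker_aeval_root {R : Type*} [CommRing R] (p : R[X]) :
    RingHom.ker (aeval (root p) : R[X] →ₐ[R] AdjoinRoot p) = Ideal.span {p} := by
  ext g
  rw [RingHom.mem_ker, aeval_eq, mk_eq_zero, Ideal.mem_span_singleton]

theorem AdjoinRoot.minpoly_root_of_monic {R : Type*} [CommRing R] {p : R[X]} (hp : p.Monic) :
    minpoly R (root p) = p := by
  nontriviality R
  refine (minpoly.unique' R (root p) hp (by simp) fun q hq => ?_).symm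
  rw [or_iff_not_imp_left]
  intro hq0 hroot
  rw [aeval_eq, mk_eq_zero] at hroot
  exact hp.not_dvd_of_degree_lt hq0 hq hroot

theorem Polynomial.ker_aeval_algHom_of_injective {R A B : Type*} [CommRing R] [Ring A] [Algebra R A]
    [Ring B] [Algebra R B] {f : A →ₐ[R] B} (hf : Function.Injective f) (x : A) :
    RingHom.ker (aeval (f x) : R[X] →ₐ[R] B) = RingHom.ker (aeval x : R[X] →ₐ[R] A) := by
  rw [aeval_algHom]
  exact RingHom.ker_comp_of_injective (aeval x).toRingHom (f := f.toRingHom) hf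

theorem Matrix.span_charpoly_le_ker_aeval {R n : Type*} [CommRing R] [Fintype n] [DecidableEq n]
    (M : Matrix n n R) :
    Ideal.span {M.charpoly} ≤ RingHom.ker (aeval M : R[X] →ₐ[R] Matrix n n R) := by
  rw [Ideal.span_le, Set.singleton_subset_iff, SetLike.mem_coe, RingHom.mem_ker]
  exact M.aeval_self_charpoly

theorem Polynomial.Monic.exists_charpoly_eq_and_ker_aeval_eq {R : Type*} [CommRing R] {p : R[X]}
    {n : ℕ} (hp : p.Monic) (hdeg : p.natDegree = n) :
    ∃ M : Matrix (Fin n) (Fin n) R, M.charpoly = p ∧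
      RingHom.ker (aeval M : R[X] →ₐ[R] Matrix _ _ R) = Ideal.span {p} := by
  subst hdeg
  let pb := AdjoinRoot.powerBasis' hp
  exact ⟨Algebra.leftMulMatrix pb.basis pb.gen,
    (charpoly_leftMulMatrix pb).trans (AdjoinRoot.minpoly_root_of_monic hp),
    (ker_aeval_algHom_of_injective (Algebra.leftMulMatrix_injective pb.basis) _).trans
      (AdjoinRoot.ker_aeval_root p)⟩

theorem nullIdeal_inter_eq_span_general (R : Type*) [CommRing R] (n : ℕ)
    (p : R[X]) (hp : p.Monic) (hdeg : p.natDegree = n) :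
    (⨅ M ∈ {M : Matrix (Fin n) (Fin n) R | M.charpoly = p},
      RingHom.ker ((Polynomial.aeval M : R[X] →ₐ[R] Matrix (Fin n) (Fin n) R) :
        R[X] →+* Matrix (Fin n) (Fin n) R)) = Ideal.span {p} := by
  obtain ⟨M, hMp, hker⟩ := hp.exists_charpoly_eq_and_ker_aeval_eq hdeg
  refine le_antisymm (hker ▸ iInf₂_le M hMp) (le_iInf₂ fun N (hN : N.charpoly = p) => ?_)
  exact hN ▸ N.span_charpoly_le_ker_aeval

/-- For a commutative ring `R`, a positive integer `n` and a monic polynomial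
`p ∈ R[X]` of degree `n`, the intersection over all matrices `M ∈ Mₙ(R)` with characteristic
polynomial `p` of the null ideals `N_{R[X]}(M) = ker (g ↦ g(M))` equals the principal ideal `(p)`. -/
theorem nullIdeal_inter_eq_span (R : Type*) [CommRing R] (n : ℕ) (hn : 0 < n)
    (p : R[X]) (hp : p.Monic) (hdeg : p.natDegree = n) :
    (⨅ M ∈ {M : Matrix (Fin n) (Fin n) R | M.charpoly = p},
      RingHom.ker ((Polynomial.aeval M : R[X] →ₐ[R] Matrix (Fin n) (Fin n) R) :
        R[X] →+* Matrix (Fin n) (Fin n) R)) = Ideal.span {p} :=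
  nullIdeal_inter_eq_span_general R n p hp hdeg
end

section
/- Let D be an integral domain with quotient field K, n a positive integer, and p ∈ D[X] a monic polynomial of degree n. For f ∈ K[X], f belongs to Int(Mₙᵖ(D), Mₙ(D)) if and only if the remainder of the Euclidean division of f by p in K[X] has all coefficients in D; equivalently, Int(Mₙᵖ(D), Mₙ(D)) = D[X] + p(X)·K[X] as subsets of K[X]. -/
open Polynomial

/-!
By Cayley–Hamilton, `f(M) = (f %ₘ p)(M)` for every `M` with characteristic polynomial `p`,
so if `f %ₘ p` has coefficients in `D` then `f(M)` has entries in `D`. Conversely, for the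
companion matrix `C` of `p` the vector `e₀` is cyclic, `Cᵏ e₀ = eₖ` for `k < deg p`; hence the
first column of `f(C)` is the coefficient vector of `f %ₘ p`, and integrality at `C` alone
forces `f %ₘ p ∈ D[X]`.
-/

/-- `IntOn D K S` is the set of polynomials `f ∈ K[X]` that are integer-valued on the set
`S ⊆ Mₙ(D)`: for every `M ∈ S`, evaluating `f` at the image of `M` in `Mₙ(K)` yields a matrix
all of whose entries lie in (the image of) `D`. -/
def IntOn (D K : Type*) [CommRing D] [Field K] [Algebra D K] {n : ℕ}
    (S : Set (Matrix (Fin n) (Fin n) D)) : Set (Polynomial K) :=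
  {f | ∀ M ∈ S, ∀ i j, ∃ d : D,
    algebraMap D K d = (Polynomial.aeval (M.map (algebraMap D K)) f) i j}

theorem AdjoinRoot.minpoly_powerBasis'_gen {R : Type*} [CommRing R] {p : R[X]} (hp : p.Monic) :
    minpoly R (AdjoinRoot.powerBasis' hp).gen = p := by
  refine (minpoly.unique' R _ hp (by simp [AdjoinRoot.aeval_eq]) fun q hq ↦
    or_iff_not_imp_left.2 fun hq0 hroot ↦ ?_).symm
  have := (AdjoinRoot.powerBasis' hp).dim_le_degree_of_root hq0 hroot
  exact (this.trans_lt (hq.trans_le degree_le_natDegree)).false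

namespace Polynomial.Monic

variable {R : Type*} [CommRing R] {p : R[X]}

/-- `powerBasisAux' hp` is `(powerBasis' hp).basis`, but indexed by `Fin p.natDegree` on the nose
rather than by the defeq `Fin (powerBasis' hp).dim`. -/
noncomputable def companion (hp : p.Monic) : Matrix (Fin p.natDegree) (Fin p.natDegree) R :=
  Algebra.leftMulMatrix (AdjoinRoot.powerBasisAux' hp) (AdjoinRoot.root p)

theorem charpoly_companion (hp : p.Monic) : hp.companion.charpoly = p :=
  (charpoly_leftMulMatrix (AdjoinRoot.powerBasis' hp)).trans
    (AdjoinRoot.minpoly_powerBasis'_gen hp)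

theorem companion_pow_apply (hp : p.Monic) (k i j : Fin p.natDegree) (hj : (j : ℕ) = 0) :
    (hp.companion ^ (k : ℕ)) i j = if k = i then 1 else 0 := by
  set b := AdjoinRoot.powerBasisAux' hp
  have hb : ∀ l : Fin p.natDegree, b l = AdjoinRoot.root p ^ (l : ℕ) :=
    (AdjoinRoot.powerBasis' hp).basis_eq_pow
  have hpow : hp.companion ^ (k : ℕ) = Algebra.leftMulMatrix b (AdjoinRoot.root p ^ (k : ℕ)) :=
    (map_pow _ _ _).symm
  rw [hpow, Algebra.leftMulMatrix_eq_repr_mul, hb j, hj, pow_zero, mul_one, ← hb,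
    b.repr_self, Finsupp.single_apply]

theorem aeval_map_companion_apply {S : Type*} [CommRing S] (hp : p.Monic) (φ : R →+* S)
    (f : S[X]) (i j : Fin p.natDegree) (hj : (j : ℕ) = 0) :
    aeval (hp.companion.map φ) f i j = (f %ₘ p.map φ).coeff i := by
  nontriviality S
  have hpS : (p.map φ).natDegree = p.natDegree := hp.natDegree_map φ
  have hdeg : (f %ₘ p.map φ).natDegree < p.natDegree := by
    refine hpS ▸ natDegree_modByMonic_lt f (hp.map φ) fun h ↦ ?_
    rw [h, natDegree_one] at hpS
    exact (hpS ▸ i).elim0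
  rw [Matrix.aeval_eq_aeval_mod_charpoly, Matrix.charpoly_map, hp.charpoly_companion,
    aeval_eq_sum_range' hdeg, Matrix.sum_apply, Finset.sum_range]
  simp [← Matrix.map_pow, hp.companion_pow_apply _ _ _ hj]

end Polynomial.Monic

theorem Matrix.map_aeval_eq_aeval_map {R A n : Type*} [CommRing R] [CommRing A] [Algebra R A]
    [Fintype n] [DecidableEq n] (M : Matrix n n R) (r : R[X]) :
    (aeval M r).map (algebraMap R A) =
      aeval (M.map (algebraMap R A)) (r.map (algebraMap R A)) := by
  refine Polynomial.map_aeval_eq_aeval_map (φ := algebraMap R A)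
    (ψ := (algebraMap R A).mapMatrix) ?_ r M
  ext x i j
  simp only [RingHom.comp_apply, Matrix.algebraMap_matrix_apply, RingHom.mapMatrix_apply,
    Matrix.map_apply]
  split_ifs <;> simp

theorem Polynomial.modByMonic_map_mem_lifts_iff {R S : Type*} [CommRing R] [CommRing S]
    (φ : R →+* S) {p : R[X]} (hp : p.Monic) (f : S[X]) :
    f %ₘ p.map φ ∈ lifts φ ↔ ∃ r q : S[X], r ∈ lifts φ ∧ f = r + p.map φ * q := by
  constructor
  · exact fun h ↦ ⟨_, _, h, (modByMonic_add_div f _).symm⟩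
  · rintro ⟨_, q, hr, rfl⟩
    obtain ⟨r, rfl⟩ := (mem_lifts _).1 hr
    rw [modByMonic_eq_of_dvd_sub (hp.map φ) (q := p.map φ) (p₂ := r.map φ)
      (by simp), ← map_modByMonic φ hp]
    exact ⟨_, rfl⟩

section IntOn

variable {D K : Type*} [CommRing D] [Field K] [Algebra D K] {p : D[X]}

theorem mem_intOn_charpoly_of_modByMonic_mem_lifts {n : ℕ} {f : K[X]}
    (hf : f %ₘ p.map (algebraMap D K) ∈ lifts (algebraMap D K)) :
    f ∈ IntOn D K {M : Matrix (Fin n) (Fin n) D | M.charpoly = p} := by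
  rintro M rfl i j
  obtain ⟨r, hr⟩ := (mem_lifts _).1 hf
  refine ⟨aeval M r i j, ?_⟩
  rw [Matrix.aeval_eq_aeval_mod_charpoly (M.map _) f, Matrix.charpoly_map, ← hr,
    ← Matrix.map_aeval_eq_aeval_map, Matrix.map_apply]

theorem modByMonic_mem_lifts_of_mem_intOn_charpoly (hp : p.Monic) {f : K[X]}
    (hf : f ∈ IntOn D K {M : Matrix (Fin p.natDegree) (Fin p.natDegree) D | M.charpoly = p}) :
    f %ₘ p.map (algebraMap D K) ∈ lifts (algebraMap D K) := by
  rw [lifts_iff_coeff_lifts]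
  intro i
  rcases lt_or_ge i p.natDegree with hi | hi
  · obtain ⟨d, hd⟩ := hf hp.companion hp.charpoly_companion ⟨i, hi⟩ ⟨0, by omega⟩
    exact ⟨d, hd.trans (hp.aeval_map_companion_apply _ f _ _ rfl)⟩
  · refine ⟨0, ?_⟩
    rw [map_zero, coeff_eq_zero_of_degree_lt]
    calc (f %ₘ p.map (algebraMap D K)).degree < (p.map (algebraMap D K)).degree :=
          degree_modByMonic_lt f (hp.map _)
      _ ≤ p.natDegree := degree_map_le.trans degree_le_natDegree
      _ ≤ i := WithBot.coe_le_coe.2 hi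

theorem mem_intOn_charpoly_iff (hp : p.Monic) (f : K[X]) :
    f ∈ IntOn D K {M : Matrix (Fin p.natDegree) (Fin p.natDegree) D | M.charpoly = p} ↔
      f %ₘ p.map (algebraMap D K) ∈ lifts (algebraMap D K) :=
  ⟨modByMonic_mem_lifts_of_mem_intOn_charpoly hp, mem_intOn_charpoly_of_modByMonic_mem_lifts⟩

end IntOn

theorem intOn_charpoly_eq_iff_general (D K : Type*) [CommRing D] [Field K] [Algebra D K]
    (n : ℕ) (p : D[X]) (hp : p.Monic) (hdeg : p.natDegree = n) (f : K[X]) :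
    (f ∈ IntOn D K {M : Matrix (Fin n) (Fin n) D | M.charpoly = p} ↔
      ∀ i, ∃ c : D, algebraMap D K c = (f %ₘ (p.map (algebraMap D K))).coeff i) ∧
    (f ∈ IntOn D K {M : Matrix (Fin n) (Fin n) D | M.charpoly = p} ↔
      ∃ r q : K[X], (∀ i, ∃ c : D, algebraMap D K c = r.coeff i) ∧
        f = r + p.map (algebraMap D K) * q) := by
  subst hdeg
  simp only [← Set.mem_range, ← lifts_iff_coeff_lifts]
  exact ⟨mem_intOn_charpoly_iff hp f,
    (mem_intOn_charpoly_iff hp f).trans (modByMonic_map_mem_lifts_iff _ hp f)⟩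

/-- Let `D` be a domain with quotient field `K`, `n` positive and `p ∈ D[X]`
monic of degree `n`.  Then `f ∈ Int(Mₙᵖ(D), Mₙ(D))` iff the remainder of the Euclidean division
of `f` by `p` in `K[X]` has all its coefficients in `D`; equivalently,
`Int(Mₙᵖ(D), Mₙ(D)) = D[X] + p·K[X]`. -/
theorem intOn_charpoly_eq_iff (D K : Type*) [CommRing D] [IsDomain D] [Field K] [Algebra D K]
    [IsFractionRing D K] (n : ℕ) (hn : 0 < n) (p : D[X]) (hp : p.Monic) (hdeg : p.natDegree = n)
    (f : K[X]) :
    (f ∈ IntOn D K {M : Matrix (Fin n) (Fin n) D | M.charpoly = p} ↔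
      ∀ i, ∃ c : D, algebraMap D K c = (f %ₘ (p.map (algebraMap D K))).coeff i) ∧
    (f ∈ IntOn D K {M : Matrix (Fin n) (Fin n) D | M.charpoly = p} ↔
      ∃ r q : K[X], (∀ i, ∃ c : D, algebraMap D K c = r.coeff i) ∧
        f = r + p.map (algebraMap D K) * q) :=
  intOn_charpoly_eq_iff_general D K n p hp hdeg f
end

section
/- Let D be an integral domain with quotient field K, n a positive integer, and p ∈ D[X] a monic polynomial of degree n with companion matrix C_p ∈ Mₙ(D). Then a polynomial f ∈ K[X] is integer-valued on the set Mₙᵖ(D) of all matrices in Mₙ(D) with characteristic polynomial p if and only if f is integer-valued on the single matrix C_p; that is, Int(Mₙᵖ(D), Mₙ(D)) = Int({C_p}, Mₙ(D)). -/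
/-!
Divide `f` by `p` in `K[X]`. By Cayley–Hamilton, `f` and its remainder `r` agree on every matrix
with characteristic polynomial `p`, including `C_p`. Since `C_p ^ k` maps `e₀` to `e_k` for
`k < n`, the first column of `r(C_p)` is the coefficient vector of `r`; so if `f(C_p)` has
entries in `D`, then `r` comes from `D[X]`, and `r(M)` has entries in `D` for every such `M`.
-/

open Polynomial

/-- The companion matrix of a (monic, degree `n`) polynomial `p`: it has `1`'s on the
subdiagonal, the negatives of the coefficients of `p` in the last column, and `0` elsewhere.
Its characteristic polynomial is `p`. -/
def companion (D : Type*) [CommRing D] (n : ℕ) (p : Polynomial D) :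
    Matrix (Fin n) (Fin n) D :=
  fun i j => (if (i : ℕ) = (j : ℕ) + 1 then 1 else 0) +
    (if (j : ℕ) = n - 1 then -(p.coeff i) else 0)

section Companion

variable {R : Type*} [CommRing R] {n : ℕ}

theorem companion_pow_apply_zero (hn : 0 < n) (p : R[X]) {k : ℕ} (hk : k < n) (i : Fin n) :
    (companion R n p ^ k) i ⟨0, hn⟩ = if (i : ℕ) = k then 1 else 0 := by
  induction k generalizing i with
  | zero => simp [Matrix.one_apply, Fin.ext_iff]
  | succ k ih =>
    rw [pow_succ', Matrix.mul_apply, Finset.sum_eq_single ⟨k, by omega⟩]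
    · simp [ih (by omega), companion, show k ≠ n - 1 by omega]
    · intro j _ hj
      simp [ih (by omega), Fin.ext_iff.not.mp hj]
    · simp

theorem companion_pow_self_apply_zero (hn : 0 < n) (p : R[X]) (i : Fin n) :
    (companion R n p ^ n) i ⟨0, hn⟩ = -p.coeff i := by
  obtain ⟨m, rfl⟩ : ∃ m, n = m + 1 := ⟨n - 1, by omega⟩
  rw [pow_succ', Matrix.mul_apply, Finset.sum_eq_single (Fin.last m)]
  · rw [companion_pow_apply_zero hn p (Nat.lt_succ_self m)]
    simp [companion, i.isLt.ne]
  · intro j _ hj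
    rw [companion_pow_apply_zero hn p (Nat.lt_succ_self m)]
    simp [show (j : ℕ) ≠ m from fun h => hj (Fin.ext h)]
  · simp

theorem aeval_companion_apply_zero (hn : 0 < n) (p f : R[X]) (hf : f.natDegree ≤ n)
    (i : Fin n) :
    (aeval (companion R n p) f) i ⟨0, hn⟩ = f.coeff i - f.coeff n * p.coeff i := by
  rw [aeval_eq_sum_range' (Nat.lt_succ_of_le hf), Finset.sum_range_succ, Matrix.add_apply,
    Matrix.sum_apply, Finset.sum_eq_single (i : ℕ)]
  · simp [companion_pow_apply_zero hn p i.isLt, companion_pow_self_apply_zero, sub_eq_add_neg]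
  · intro k hk hki
    simp [companion_pow_apply_zero hn p (Finset.mem_range.mp hk), Ne.symm hki]
  · simp

theorem charpoly_companion (hn : 0 < n) {p : R[X]} (hp : p.Monic) (hdeg : p.natDegree = n) :
    (companion R n p).charpoly = p := by
  nontriviality R
  set c := (companion R n p).charpoly
  have hc : c.Monic := Matrix.charpoly_monic _
  have hcdeg : c.natDegree = n := by simp [c]
  have hc_lead : c.coeff n = 1 := hcdeg ▸ hc.coeff_natDegree
  have hp_lead : p.coeff n = 1 := hdeg ▸ hp.coeff_natDegree
  ext m
  rcases lt_trichotomy m n with hm | rfl | hm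
  · have h := aeval_companion_apply_zero hn p c hcdeg.le ⟨m, hm⟩
    rw [Matrix.aeval_self_charpoly, hc_lead, one_mul, Matrix.zero_apply] at h
    exact sub_eq_zero.mp h.symm
  · rw [hc_lead, hp_lead]
  · rw [coeff_eq_zero_of_natDegree_lt (hcdeg ▸ hm), coeff_eq_zero_of_natDegree_lt (hdeg ▸ hm)]

theorem companion_map {S : Type*} [CommRing S] (φ : R →+* S) (p : R[X]) :
    (companion R n p).map φ = companion S n (p.map φ) := by
  ext i j
  simp [companion, apply_ite φ]

end Companion

theorem aeval_matrix_map_algebraMap {R A : Type*} [CommRing R] [CommRing A] [Algebra R A]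
    {m : Type*} [Fintype m] [DecidableEq m] (M : Matrix m m R) (q : R[X]) :
    aeval (M.map (algebraMap R A)) (q.map (algebraMap R A)) =
      (aeval M q).map (algebraMap R A) := by
  rw [aeval_map_algebraMap]
  exact aeval_algHom_apply (Algebra.ofId R A).mapMatrix M q

theorem modByMonic_mem_lifts_of_mem_intOn {D K : Type*} [CommRing D] [Field K] [Algebra D K]
    {n : ℕ} (hn : 0 < n) {p : D[X]} (hp : p.Monic) (hdeg : p.natDegree = n) {f : K[X]}
    (hf : f ∈ IntOn D K {companion D n p}) :
    f %ₘ p.map (algebraMap D K) ∈ lifts (algebraMap D K) := by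
  set pK := p.map (algebraMap D K)
  have hpK : pK.Monic := hp.map _
  have hdegK : pK.natDegree = n := by rw [hp.natDegree_map, hdeg]
  have hr : (f %ₘ pK).natDegree < n :=
    hdegK ▸ natDegree_modByMonic_lt f hpK fun h => by simp [h] at hdegK; omega
  have hroot : aeval (companion K n pK) pK = 0 := by
    simpa [charpoly_companion hn hpK hdegK] using Matrix.aeval_self_charpoly (companion K n pK)
  rw [lifts_iff_coeff_lifts]
  intro m
  rcases lt_or_ge m n with hm | hm
  · obtain ⟨d, hd⟩ := hf _ rfl ⟨m, hm⟩ ⟨0, hn⟩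
    refine ⟨d, hd.trans ?_⟩
    rw [companion_map, ← aeval_modByMonic_eq_self_of_root hroot,
      aeval_companion_apply_zero hn _ _ hr.le, coeff_eq_zero_of_natDegree_lt hr, zero_mul,
      sub_zero]
  · rw [coeff_eq_zero_of_natDegree_lt (hr.trans_le hm)]
    exact ⟨0, map_zero _⟩

theorem intOn_charpoly_eq_intOn_companion_general (D K : Type*) [CommRing D] [Field K]
    [Algebra D K] (n : ℕ) (hn : 0 < n) (p : D[X]) (hp : p.Monic)
    (hdeg : p.natDegree = n) :
    IntOn D K {M : Matrix (Fin n) (Fin n) D | M.charpoly = p} =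
      IntOn D K {companion D n p} := by
  ext f
  refine ⟨fun hf M hM => hf M (hM ▸ charpoly_companion hn hp hdeg), fun hf M hM i j => ?_⟩
  obtain ⟨r, hr⟩ := (mem_lifts _).mp (modByMonic_mem_lifts_of_mem_intOn hn hp hdeg hf)
  have hroot : aeval (M.map (algebraMap D K)) (p.map (algebraMap D K)) = 0 := by
    rw [← hM.out, ← Matrix.charpoly_map]
    exact Matrix.aeval_self_charpoly _
  refine ⟨aeval M r i j, ?_⟩
  rw [← aeval_modByMonic_eq_self_of_root hroot, ← hr, aeval_matrix_map_algebraMap]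
  rfl

/-- Let `D` be a domain with quotient field `K`, `n` positive and `p ∈ D[X]`
monic of degree `n` with companion matrix `C_p ∈ Mₙ(D)`.  Then a polynomial `f ∈ K[X]` is
integer-valued on the set `Mₙᵖ(D)` of matrices with characteristic polynomial `p` iff it is
integer-valued on the single matrix `C_p`: `Int(Mₙᵖ(D), Mₙ(D)) = Int({C_p}, Mₙ(D))`. -/
theorem intOn_charpoly_eq_intOn_companion (D K : Type*) [CommRing D] [IsDomain D] [Field K]
    [Algebra D K] [IsFractionRing D K] (n : ℕ) (hn : 0 < n) (p : D[X]) (hp : p.Monic)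
    (hdeg : p.natDegree = n) :
    IntOn D K {M : Matrix (Fin n) (Fin n) D | M.charpoly = p} =
      IntOn D K {companion D n p} :=
  intOn_charpoly_eq_intOn_companion_general D K n hn p hp hdeg
end

section
/- Let D be an integral domain with quotient field K and n a positive integer. Then Int(Mₙ(D)) equals the intersection, over all monic polynomials p ∈ D[X] of degree n, of the rings Int(Mₙᵖ(D), Mₙ(D)). Equivalently, f ∈ K[X] is integer-valued on all of Mₙ(D) if and only if, writing f = g/d with g ∈ D[X] and d ∈ D \ {0}, the polynomial g is divisible modulo dD[X] by every monic polynomial p ∈ D[X] of degree n. -/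
/-!
Write `f = g / d`. Then `f` is integer-valued at `M` exactly when `d` divides every entry of
`g(M)`. If `g = d u + v χ_M`, Cayley–Hamilton gives `g(M) = d u(M)`. Conversely, for a monic `p`
of degree `n` with companion matrix `C_p`, the first column of `g(C_p)` lists the coefficients of
`g mod p`, so `d ∣ g(C_p)` forces `g ∈ (d, p)`. The first equality is formal, since the fibres
of `M ↦ χ_M` cover `Mₙ(D)`.
-/

open Polynomial

section Companion

variable {R : Type*} [CommRing R] {p : R[X]}

noncomputable def companionMatrix (hp : p.Monic) : Matrix (Fin p.natDegree) (Fin p.natDegree) R :=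
  Algebra.leftMulMatrix (AdjoinRoot.powerBasisAux' hp) (AdjoinRoot.root p)

theorem aeval_companionMatrix (hp : p.Monic) (g : R[X]) :
    aeval (companionMatrix hp) g =
      Algebra.leftMulMatrix (AdjoinRoot.powerBasisAux' hp) (AdjoinRoot.mk p g) := by
  rw [companionMatrix, ← AdjoinRoot.aeval_eq, ← aeval_algHom_apply]

theorem aeval_companionMatrix_apply_zero (hp : p.Monic) (g : R[X]) (i : Fin p.natDegree) :
    aeval (companionMatrix hp) g i ⟨0, i.pos⟩ = (g %ₘ p).coeff i := by
  have hone : AdjoinRoot.powerBasisAux' hp ⟨0, i.pos⟩ = 1 :=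
    ((AdjoinRoot.powerBasis' hp).basis_eq_pow ⟨0, i.pos⟩).trans (pow_zero _)
  rw [aeval_companionMatrix, Algebra.leftMulMatrix_eq_repr_mul, hone, mul_one,
    AdjoinRoot.powerBasisAux'_repr_apply_to_fun, AdjoinRoot.modByMonicHom_mk]

theorem mem_span_C_of_dvd_aeval_companionMatrix (hp : p.Monic) {d : R} {g : R[X]}
    (h : ∀ i j, d ∣ aeval (companionMatrix hp) g i j) : g ∈ Ideal.span {C d, p} := by
  nontriviality R
  have hcoeff : ∀ k, d ∣ (g %ₘ p).coeff k := by
    intro k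
    by_cases hk : k < p.natDegree
    · simpa only [aeval_companionMatrix_apply_zero] using h ⟨k, hk⟩ ⟨0, by omega⟩
    · rw [coeff_eq_zero_of_degree_lt ((degree_modByMonic_lt g hp).trans_le
        (degree_le_natDegree.trans (by exact_mod_cast not_lt.1 hk)))]
      exact dvd_zero d
  obtain ⟨u, hu⟩ := (C_dvd_iff_dvd_coeff d _).2 hcoeff
  refine Ideal.mem_span_pair.2 ⟨u, g /ₘ p, ?_⟩
  rw [mul_comm u, mul_comm (g /ₘ p), ← hu, modByMonic_add_div g p]

end Companion

theorem Matrix.map_algebraMap_aeval {R A ι : Type*} [CommRing R] [CommRing A] [Algebra R A]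
    [Fintype ι] [DecidableEq ι] (M : Matrix ι ι R) (g : R[X]) :
    (aeval M g).map (algebraMap R A) = aeval (M.map (algebraMap R A)) g :=
  (aeval_algHom_apply (Algebra.ofId R A).mapMatrix M g).symm

theorem Matrix.dvd_aeval_apply_of_mem_span_charpoly {R ι : Type*} [CommRing R] [Fintype ι]
    [DecidableEq ι] {M : Matrix ι ι R} {d : R} {g : R[X]}
    (hg : g ∈ Ideal.span {C d, M.charpoly}) (i j : ι) : d ∣ aeval M g i j := by
  obtain ⟨u, v, rfl⟩ := Ideal.mem_span_pair.1 hg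
  refine ⟨aeval M u i j, ?_⟩
  simp [aeval_self_charpoly, Matrix.algebraMap_eq_diagonal, mul_comm]

theorem intOn_antitone {D K : Type*} [CommRing D] [Field K] [Algebra D K] {n : ℕ}
    {S T : Set (Matrix (Fin n) (Fin n) D)} (hST : S ⊆ T) : IntOn D K T ⊆ IntOn D K S :=
  fun _ hf M hM => hf M (hST hM)

theorem mem_intOn_iff_forall_dvd {D K : Type*} [CommRing D] [Field K] [Algebra D K]
    (hinj : Function.Injective (algebraMap D K)) {n : ℕ} {S : Set (Matrix (Fin n) (Fin n) D)}
    {f : K[X]} {g : D[X]} {d : D} (hd : d ≠ 0)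
    (hfg : f * C (algebraMap D K d) = g.map (algebraMap D K)) :
    f ∈ IntOn D K S ↔ ∀ M ∈ S, ∀ i j, d ∣ aeval M g i j := by
  have hentry : ∀ (M : Matrix (Fin n) (Fin n) D) i j,
      aeval (M.map (algebraMap D K)) f i j * algebraMap D K d
        = algebraMap D K (aeval M g i j) := by
    intro M i j
    have h := congrArg (· i j) (congrArg (aeval (M.map (algebraMap D K))) hfg)
    rw [map_mul, aeval_C, aeval_map_algebraMap, ← Matrix.map_algebraMap_aeval] at h
    simpa [Matrix.algebraMap_eq_diagonal] using h
  have hd' : algebraMap D K d ≠ 0 := (map_ne_zero_iff _ hinj).2 hd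
  refine forall₂_congr fun M _ => forall₂_congr fun i j => ⟨fun ⟨c, hc⟩ => ⟨c, hinj ?_⟩,
    fun ⟨c, hc⟩ => ⟨c, mul_right_cancel₀ hd' ?_⟩⟩
  · rw [← hentry, ← hc, map_mul, mul_comm]
  · rw [hentry, hc, map_mul, mul_comm]

theorem intOn_univ_eq_iInter_charpoly_general (D K : Type*) [CommRing D] [IsDomain D] [Field K]
    [Algebra D K] [IsFractionRing D K] (n : ℕ) :
    (IntOn D K (Set.univ : Set (Matrix (Fin n) (Fin n) D)) =
      ⋂ p ∈ {p : D[X] | p.Monic ∧ p.natDegree = n},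
        IntOn D K {M : Matrix (Fin n) (Fin n) D | M.charpoly = p}) ∧
    (∀ (f : K[X]) (g : D[X]) (d : D), d ≠ 0 →
      f * C (algebraMap D K d) = g.map (algebraMap D K) →
      (f ∈ IntOn D K (Set.univ : Set (Matrix (Fin n) (Fin n) D)) ↔
        ∀ p : D[X], p.Monic → p.natDegree = n → g ∈ Ideal.span {Polynomial.C d, p})) := by
  have hdeg (M : Matrix (Fin n) (Fin n) D) : M.charpoly.natDegree = n :=
    M.charpoly_natDegree_eq_dim.trans (Fintype.card_fin n)
  refine ⟨?_, fun f g d hd hfg => ?_⟩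
  · ext f
    simp only [Set.mem_iInter]
    exact ⟨fun hf p _ => intOn_antitone (Set.subset_univ _) hf,
      fun hf M _ => hf M.charpoly ⟨M.charpoly_monic, hdeg M⟩ M rfl⟩
  · rw [mem_intOn_iff_forall_dvd (IsFractionRing.injective D K) hd hfg]
    refine ⟨?_, fun h M _ =>
      Matrix.dvd_aeval_apply_of_mem_span_charpoly (h _ M.charpoly_monic (hdeg M))⟩
    rintro h p hp rfl
    exact mem_span_C_of_dvd_aeval_companionMatrix hp fun i j => h _ trivial i j

/-- Let `D` be a domain with quotient field `K` and `n` positive.  Then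
`Int(Mₙ(D))` equals the intersection over all monic `p ∈ D[X]` of degree `n` of the rings
`Int(Mₙᵖ(D), Mₙ(D))`.  Equivalently, writing `f = g/d` with `g ∈ D[X]`, `d ∈ D \ {0}`,
`f` is integer-valued on all of `Mₙ(D)` iff `g` is divisible modulo `dD[X]` by every monic
polynomial `p ∈ D[X]` of degree `n`. -/
theorem intOn_univ_eq_iInter_charpoly (D K : Type*) [CommRing D] [IsDomain D] [Field K]
    [Algebra D K] [IsFractionRing D K] (n : ℕ) (hn : 0 < n) :
    (IntOn D K (Set.univ : Set (Matrix (Fin n) (Fin n) D)) =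
      ⋂ p ∈ {p : D[X] | p.Monic ∧ p.natDegree = n},
        IntOn D K {M : Matrix (Fin n) (Fin n) D | M.charpoly = p}) ∧
    (∀ (f : K[X]) (g : D[X]) (d : D), d ≠ 0 →
      f * C (algebraMap D K d) = g.map (algebraMap D K) →
      (f ∈ IntOn D K (Set.univ : Set (Matrix (Fin n) (Fin n) D)) ↔
        ∀ p : D[X], p.Monic → p.natDegree = n → g ∈ Ideal.span {Polynomial.C d, p})) :=
  intOn_univ_eq_iInter_charpoly_general D K n
end

section
/- Let D ⊆ D' be an extension of integral domains with quotient fields K ⊆ K' respectively, such that D' ∩ K = D (intersection taken inside K'). Let p ∈ D[X] be monic, let d ∈ D, and let g ∈ D[X]. If g lies in the ideal dD'[X] + pD'[X] of D'[X], then g lies in the ideal dD[X] + pD[X] of D[X]. Equivalently, dD[X] + p(X)D[X] = (dD'[X] + p(X)D'[X]) ∩ D[X]. -/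
open Polynomial

/-!
Reduce `g` modulo the monic `p`. Over any commutative ring, `f ∈ (c, q)` with `q` monic exactly
when the remainder `f %ₘ q` is a multiple of the constant `c`, and division by a monic polynomial
commutes with extending scalars. So the hypothesis says that `d` divides every coefficient of
`g %ₘ p` in `D'`. If `x = d y` with `x, d ∈ D` and `y ∈ D'`, then `y = x / d` also lies in `K`,
hence in `D' ∩ K = D`, so `d` divides `x` already in `D`.
-/

theorem Polynomial.mem_span_C_pair_iff_C_dvd_modByMonic {R : Type*} [CommRing R] {q : R[X]}
    (hq : q.Monic) (c : R) (f : R[X]) :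
    f ∈ Ideal.span {C c, q} ↔ C c ∣ f %ₘ q := by
  rw [Ideal.mem_span_pair]
  constructor
  · rintro ⟨a, b, rfl⟩
    rw [add_modByMonic, mul_comm b, self_mul_modByMonic hq, add_zero, mul_comm, C_mul',
      smul_modByMonic, ← C_mul']
    exact dvd_mul_right _ _
  · rintro ⟨t, ht⟩
    exact ⟨t, f /ₘ q, by rw [mul_comm t, ← ht, mul_comm, modByMonic_add_div]⟩

theorem IsFractionRing.injective_algebraMap_of_isScalarTower (D K K' : Type*) [CommRing D]
    [Field K] [Field K'] [Algebra D K] [IsFractionRing D K] [Algebra K K'] [Algebra D K']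
    [IsScalarTower D K K'] : Function.Injective (algebraMap D K') := by
  rw [IsScalarTower.algebraMap_eq D K K']
  exact (algebraMap K K').injective.comp (IsFractionRing.injective D K)

section Contraction

variable {D D' K K' : Type*} [CommRing D] [CommRing D'] [Field K] [Field K']
  [Algebra D K] [IsFractionRing D K] [Algebra D' K'] [Algebra D D'] [Algebra K K'] [Algebra D K']
  [IsScalarTower D D' K'] [IsScalarTower D K K']
  (hcap : ∀ x : K', (∃ y : D', algebraMap D' K' y = x) → (∃ z : K, algebraMap K K' z = x) →
  ∃ w : D, algebraMap D K' w = x)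
include hcap

theorem dvd_of_algebraMap_dvd_algebraMap {d x : D}
    (h : algebraMap D D' d ∣ algebraMap D D' x) : d ∣ x := by
  have hinj := IsFractionRing.injective_algebraMap_of_isScalarTower D K K'
  obtain ⟨y, hy⟩ := h
  have hxy : algebraMap D K' x = algebraMap D K' d * algebraMap D' K' y := by
    simp only [IsScalarTower.algebraMap_apply D D' K', hy, map_mul]
  rcases eq_or_ne d 0 with rfl | hd
  · rw [map_zero, zero_mul, ← map_zero (algebraMap D K')] at hxy
    rw [hinj hxy]
  have hdK : algebraMap D K d ≠ 0 := (map_ne_zero_iff _ (IsFractionRing.injective D K)).mpr hd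
  obtain ⟨w, hw⟩ := hcap (algebraMap D' K' y) ⟨y, rfl⟩
    ⟨algebraMap D K x / algebraMap D K d, by
      rw [map_div₀, div_eq_iff ((_root_.map_ne_zero _).mpr hdK), ← IsScalarTower.algebraMap_apply,
        ← IsScalarTower.algebraMap_apply, hxy, mul_comm]⟩
  exact ⟨w, hinj (by rw [map_mul, hw, hxy])⟩

theorem C_dvd_of_C_dvd_map {d : D} {f : D[X]}
    (h : C (algebraMap D D' d) ∣ f.map (algebraMap D D')) : C d ∣ f := by
  rw [C_dvd_iff_dvd_coeff] at h ⊢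
  intro i
  exact dvd_of_algebraMap_dvd_algebraMap hcap (by simpa only [coeff_map] using h i)

end Contraction

theorem span_d_p_contracted_general (D D' K K' : Type*) [CommRing D]
    [CommRing D'] [Field K] [Field K']
    [Algebra D K] [IsFractionRing D K] [Algebra D' K']
    [Algebra D D'] [Algebra K K'] [Algebra D K']
    [IsScalarTower D D' K'] [IsScalarTower D K K']
    (hcap : ∀ x : K', (∃ y : D', algebraMap D' K' y = x) → (∃ z : K, algebraMap K K' z = x) →
      ∃ w : D, algebraMap D K' w = x)
    (p : D[X]) (hp : p.Monic) (d : D) :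
    (∀ g : D[X],
      g.map (algebraMap D D') ∈
        Ideal.span {Polynomial.C (algebraMap D D' d), p.map (algebraMap D D')} →
      g ∈ Ideal.span {Polynomial.C d, p}) ∧
    Ideal.span {Polynomial.C d, p} =
      Ideal.comap (Polynomial.mapRingHom (algebraMap D D'))
        (Ideal.span {Polynomial.C (algebraMap D D' d), p.map (algebraMap D D')}) := by
  have contracted : ∀ g : D[X], g.map (algebraMap D D') ∈
      Ideal.span {C (algebraMap D D' d), p.map (algebraMap D D')} → g ∈ Ideal.span {C d, p} := by
    intro g hg
    rw [mem_span_C_pair_iff_C_dvd_modByMonic (hp.map _), ← map_modByMonic _ hp] at hg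
    rw [mem_span_C_pair_iff_C_dvd_modByMonic hp]
    exact C_dvd_of_C_dvd_map hcap hg
  refine ⟨contracted, le_antisymm ?_ contracted⟩
  rw [← Ideal.map_le_iff_le_comap, Ideal.map_span, Set.image_pair, coe_mapRingHom, map_C]

/-- Let `D ⊆ D'` be an extension of domains with quotient fields `K ⊆ K'`
respectively, such that `D' ∩ K = D` (inside `K'`).  Let `p ∈ D[X]` be monic, `d ∈ D` and
`g ∈ D[X]`.  If `g` lies in the ideal `dD'[X] + pD'[X]` of `D'[X]`, then `g` lies in the ideal
`dD[X] + pD[X]` of `D[X]`; equivalently,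
`dD[X] + pD[X] = (dD'[X] + pD'[X]) ∩ D[X]`. -/
theorem span_d_p_contracted (D D' K K' : Type*) [CommRing D] [IsDomain D]
    [CommRing D'] [IsDomain D'] [Field K] [Field K']
    [Algebra D K] [IsFractionRing D K] [Algebra D' K'] [IsFractionRing D' K']
    [Algebra D D'] [Algebra K K'] [Algebra D K']
    [IsScalarTower D D' K'] [IsScalarTower D K K']
    (hcap : ∀ x : K', (∃ y : D', algebraMap D' K' y = x) → (∃ z : K, algebraMap K K' z = x) →
      ∃ w : D, algebraMap D K' w = x)
    (p : D[X]) (hp : p.Monic) (d : D) :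
    (∀ g : D[X],
      g.map (algebraMap D D') ∈
        Ideal.span {Polynomial.C (algebraMap D D' d), p.map (algebraMap D D')} →
      g ∈ Ideal.span {Polynomial.C d, p}) ∧
    Ideal.span {Polynomial.C d, p} =
      Ideal.comap (Polynomial.mapRingHom (algebraMap D D'))
        (Ideal.span {Polynomial.C (algebraMap D D' d), p.map (algebraMap D D')}) :=
  span_d_p_contracted_general D D' K K' hcap p hp d
end

section
/- Let D be an integral domain, g ∈ D[X], d ∈ D \ {0}, and let a₀, a₁, …, a_{n−1} ∈ D be elements (not necessarily distinct). Set p(X) = ∏_{i=0}^{n−1}(X − a_i). Then g lies in the ideal dD[X] + pD[X] of D[X] if and only if for every k with 0 ≤ k < n, the divided difference value Φᵏ(g)(a₀, …, a_k) lies in the principal ideal dD. -/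
open Polynomial

/-- `IsDivDiff R Φ` says that the family `Φ` assigns to each polynomial `g ∈ R[X]` and each
`k ∈ ℕ` its `k`-th divided difference, the polynomial `Φᵏ(g) ∈ R[X₀,…,X_k]` characterized
recursively by `Φ⁰(g)(X₀) = g(X₀)` and
`Φᵏ(g)(X₀,…,X_k)·(X_{k−1} − X_k) = Φ^{k−1}(g)(X₀,…,X_{k−1}) − Φ^{k−1}(g)(X₀,…,X_{k−2},X_k)`. -/
def IsDivDiff (R : Type*) [CommRing R]
    (Φ : ∀ k : ℕ, Polynomial R → MvPolynomial (Fin (k + 1)) R) : Prop :=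
  (∀ g : Polynomial R, Φ 0 g = Polynomial.aeval (MvPolynomial.X 0) g) ∧
  (∀ (k : ℕ) (g : Polynomial R),
    Φ (k + 1) g *
        (MvPolynomial.X (Fin.castSucc (Fin.last k)) - MvPolynomial.X (Fin.last (k + 1))) =
      MvPolynomial.rename Fin.castSucc (Φ k g) -
        MvPolynomial.rename
          (fun i => if i = Fin.last k then Fin.last (k + 1) else Fin.castSucc i) (Φ k g))

/-!
Divided differences yield Newton's interpolation formula with remainder: for any nodes
`b₀, b₁, …` and every `m`,
`g = ∑_{k<m} Φᵏ(g)(b₀,…,b_k) ∏_{i<k} (X - bᵢ) + Φᵐ(g)(b₀,…,b_{m-1},X) ∏_{i<m} (X - bᵢ)`.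
Taking `m = n` shows that `g ∈ (d, p)` as soon as `d` divides the first `n` coefficients.
Conversely, take `m = k + 1 ≤ n` and reduce modulo `d`: the sum of the first `k + 1` terms has
degree at most `k` and is divisible by the monic polynomial `∏_{i≤k} (X - bᵢ)` of degree `k + 1`,
so it vanishes; its coefficient of `X^k` is `Φᵏ(g)(b₀,…,b_k)`.
-/

section

open Finset Lagrange

variable {R : Type*} [CommRing R]

theorem map_nodal {S ι : Type*} [CommRing S] (f : R →+* S) (s : Finset ι) (v : ι → R) :
    (nodal s v).map f = nodal s (f ∘ v) := by
  simp [nodal, Polynomial.map_prod]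

theorem coeff_sum_C_mul_nodal_range (c b : ℕ → R) (k : ℕ) :
    (∑ j ∈ range (k + 1), C (c j) * nodal (range j) b).coeff k = c k := by
  nontriviality R
  have hlow : ∀ j ∈ range k, (nodal (range j) b).coeff k = 0 := fun j hj =>
    coeff_eq_zero_of_natDegree_lt (by simpa using hj)
  have htop : (nodal (range k) b).coeff k = 1 := by
    simpa using (nodal_monic (s := range k) (v := b)).coeff_natDegree
  rw [sum_range_succ, coeff_add, finsetSum_coeff, coeff_C_mul, htop, mul_one,
    sum_eq_zero fun j hj => by rw [coeff_C_mul, hlow j hj, mul_zero], zero_add]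

theorem eq_zero_of_nodal_dvd_sum_C_mul_nodal {c b : ℕ → R} {k : ℕ}
    (h : nodal (range (k + 1)) b ∣ ∑ j ∈ range (k + 1), C (c j) * nodal (range j) b) :
    c k = 0 := by
  nontriviality R
  rw [← coeff_sum_C_mul_nodal_range c b k]
  by_contra hne
  refine nodal_monic.not_dvd_of_natDegree_lt (fun h0 => hne (by rw [h0, coeff_zero])) ?_ h
  rw [natDegree_nodal, card_range, Nat.lt_succ_iff]
  refine natDegree_sum_le_of_forall_le _ _ fun j hj => (natDegree_C_mul_le _ _).trans ?_
  simpa using Nat.lt_succ_iff.mp (mem_range.mp hj)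

section Newton

variable (Φ : ∀ k : ℕ, R[X] → MvPolynomial (Fin (k + 1)) R) (g : R[X]) (b : ℕ → R)

/-- `Φᵏ(g)(b₀, …, b_k)`. -/
noncomputable def newtonCoeff (k : ℕ) : R :=
  MvPolynomial.eval (fun i : Fin (k + 1) => b i) (Φ k g)

/-- `Φᵐ(g)(b₀, …, b_{m-1}, X)`. -/
noncomputable def newtonRemainder (m : ℕ) : R[X] :=
  MvPolynomial.aeval (fun i : Fin (m + 1) => if (i : ℕ) < m then C (b i) else X) (Φ m g)

variable {Φ}

theorem newtonRemainder_zero (hΦ : IsDivDiff R Φ) : newtonRemainder Φ g b 0 = g := by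
  rw [newtonRemainder, hΦ.1, ← Polynomial.aeval_algHom_apply, MvPolynomial.aeval_X,
    if_neg (Nat.not_lt_zero _), aeval_X_left_apply]

theorem newtonRemainder_eq (hΦ : IsDivDiff R Φ) (m : ℕ) :
    newtonRemainder Φ g b m =
      C (newtonCoeff Φ g b m) + (X - C (b m)) * newtonRemainder Φ g b (m + 1) := by
  have h := congrArg (MvPolynomial.aeval
      fun i : Fin (m + 2) => if (i : ℕ) < m + 1 then C (b i) else X) (hΦ.2 m g)
  have hleft : (fun i : Fin (m + 2) => if (i : ℕ) < m + 1 then C (b i) else X) ∘ Fin.castSucc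
      = algebraMap R R[X] ∘ fun i : Fin (m + 1) => b i := by
    funext i
    rw [Function.comp_apply, Fin.val_castSucc, if_pos i.isLt]
    rfl
  have hright : (fun i : Fin (m + 2) => if (i : ℕ) < m + 1 then C (b i) else X) ∘
      (fun i : Fin (m + 1) => if i = Fin.last m then Fin.last (m + 1) else Fin.castSucc i)
      = fun i : Fin (m + 1) => if (i : ℕ) < m then C (b i) else X := by
    funext i
    rcases Fin.eq_castSucc_or_eq_last i with ⟨i, rfl⟩ | rfl
    · simp [i.isLt, Fin.castSucc_ne_last]
    · simp
  simp only [map_mul, map_sub, MvPolynomial.aeval_X, MvPolynomial.aeval_rename, hleft, hright,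
    MvPolynomial.aeval_algebraMap_apply, MvPolynomial.aeval_eq_eval, Fin.val_castSucc,
    Fin.val_last, lt_add_iff_pos_right, zero_lt_one, if_true, lt_irrefl, if_false] at h
  rw [newtonRemainder, newtonRemainder, newtonCoeff]
  linear_combination h

theorem eq_sum_newtonCoeff_add_newtonRemainder (hΦ : IsDivDiff R Φ) (m : ℕ) :
    g = ∑ k ∈ range m, C (newtonCoeff Φ g b k) * nodal (range k) b +
      newtonRemainder Φ g b m * nodal (range m) b := by
  induction m with
  | zero => simp [newtonRemainder_zero g b hΦ]
  | succ m ih =>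
    rw [newtonRemainder_eq g b hΦ] at ih
    rw [sum_range_succ, nodal_eq (range (m + 1)), prod_range_succ, ← nodal_eq]
    linear_combination ih

end Newton

section Divisibility

variable {Φ : ∀ k : ℕ, R[X] → MvPolynomial (Fin (k + 1)) R} {g : R[X]} {b : ℕ → R} {d : R}
  {n : ℕ}

theorem dvd_newtonCoeff_of_mem_span (hΦ : IsDivDiff R Φ)
    (hg : g ∈ Ideal.span {C d, nodal (range n) b}) {k : ℕ} (hk : k < n) :
    d ∣ newtonCoeff Φ g b k := by
  set π := Ideal.Quotient.mk (Ideal.span {d})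
  obtain ⟨u, v, hg⟩ := Ideal.mem_span_pair.mp hg
  obtain ⟨e, he⟩ : nodal (range (k + 1)) b ∣ nodal (range n) b :=
    prod_dvd_prod_of_subset _ _ _ (range_subset_range.mpr hk)
  have hsum : ∑ j ∈ range (k + 1), C (newtonCoeff Φ g b j) * nodal (range j) b =
      C d * u + nodal (range (k + 1)) b * (e * v - newtonRemainder Φ g b (k + 1)) := by
    linear_combination -eq_sum_newtonCoeff_add_newtonRemainder g b hΦ (k + 1) - hg + v * he
  have hπ : nodal (range (k + 1)) (π ∘ b) ∣
      ∑ j ∈ range (k + 1), C (π (newtonCoeff Φ g b j)) * nodal (range j) (π ∘ b) := by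
    refine ⟨(e * v - newtonRemainder Φ g b (k + 1)).map π, ?_⟩
    simpa [Polynomial.map_sum, map_nodal, π, Ideal.Quotient.mk_singleton_self] using
      congrArg (Polynomial.map π) hsum
  rw [← Ideal.mem_span_singleton, ← Ideal.Quotient.eq_zero_iff_mem]
  exact eq_zero_of_nodal_dvd_sum_C_mul_nodal hπ

theorem mem_span_of_dvd_newtonCoeff (hΦ : IsDivDiff R Φ)
    (h : ∀ k < n, d ∣ newtonCoeff Φ g b k) : g ∈ Ideal.span {C d, nodal (range n) b} := by
  rw [eq_sum_newtonCoeff_add_newtonRemainder g b hΦ n]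
  refine Ideal.add_mem _ (Ideal.sum_mem _ fun k hk => ?_) ?_
  · obtain ⟨e, he⟩ := h k (mem_range.mp hk)
    rw [he, C_mul, mul_assoc]
    exact Ideal.mul_mem_right _ _ (Ideal.subset_span (Set.mem_insert _ _))
  · exact Ideal.mul_mem_left _ _ (Ideal.subset_span (Set.mem_insert_of_mem _ rfl))

end Divisibility

end

/-- Let `D` be a domain, `g ∈ D[X]`, `d ∈ D \ {0}`, and `a₀,…,a_{n−1} ∈ D`
(not necessarily distinct); set `p = ∏ᵢ (X − aᵢ)`.  Then `g ∈ dD[X] + pD[X]` iff for every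
`0 ≤ k < n` the divided difference value `Φᵏ(g)(a₀,…,a_k)` lies in `dD`. -/
theorem mem_span_prod_iff_divDiff (D : Type*) [CommRing D]
    (Φ : ∀ k : ℕ, Polynomial D → MvPolynomial (Fin (k + 1)) D) (hΦ : IsDivDiff D Φ)
    (g : D[X]) (d : D) (n : ℕ) (a : Fin n → D) :
    g ∈ Ideal.span {Polynomial.C d, ∏ i, (X - C (a i))} ↔
      ∀ k, (hk : k < n) →
        d ∣ MvPolynomial.eval (fun i : Fin (k + 1) => a ⟨i, by omega⟩) (Φ k g) := by
  set b : ℕ → D := fun i => if h : i < n then a ⟨i, h⟩ else 0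
  have hnodal : ∏ i, (X - C (a i)) = Lagrange.nodal (Finset.range n) b := by
    rw [Lagrange.nodal_eq, ← Fin.prod_univ_eq_prod_range]
    simp [b]
  have hcoeff : ∀ k (hk : k < n),
      MvPolynomial.eval (fun i : Fin (k + 1) => a ⟨i, by omega⟩) (Φ k g) = newtonCoeff Φ g b k :=
    fun k hk => by
      simp only [newtonCoeff, b]
      congr with i
      rw [dif_pos (by omega)]
  rw [hnodal]
  exact ⟨fun hg k hk => hcoeff k hk ▸ dvd_newtonCoeff_of_mem_span hΦ hg hk,
    fun h => mem_span_of_dvd_newtonCoeff hΦ fun k hk => hcoeff k hk ▸ h k hk⟩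
end

section
/- Let D be an integrally closed domain with quotient field K. Let g ∈ D[X], d ∈ D \ {0}, and let p ∈ D[X] be monic of degree n. Let α₁, …, αₙ be the roots of p (counted with multiplicity) in a splitting field F of p over K, and let D_F denote the integral closure of D in F. Then f = g/d belongs to Int(Mₙᵖ(D), Mₙ(D)) if and only if for every k with 0 ≤ k < n and every choice of indices i₀, …, i_k from {1, …, n} corresponding to a multi-subset of k+1 of the roots, the value Φᵏ(g)(α_{i₀}, …, α_{i_k}) lies in d·D_F. -/
open Polynomial

/-!
Write `r = g %ₘ p`. By Cayley–Hamilton `g(M) = r(M)` whenever `M` has characteristic polynomial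
`p`, and for the matrix of multiplication by the root of `p` on `D[X]/(p)` (whose characteristic
polynomial is `p`) the first column of `r(M)` lists the coefficients of `r`. Hence `f = g/d` is
integer-valued on `Mₙᵖ(D)` iff `d` divides every coefficient of `r`.

Newton's interpolation formula at the roots `α₀, …, αₙ₋₁` of `p` gives
`r = ∑_{j<n} Φʲ(g)(α₀, …, α_j) ∏_{i<j} (X - αᵢ)`, a unitriangular change of basis over `D_F`, so
the coefficients of `r` lie in `d·D_F` iff these divided differences do; and `d·D_F ∩ D = d·D`
because `D` is integrally closed. Any injective choice of indices starts some ordering of the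
roots.
-/

theorem Polynomial.natDegree_prod_range_X_sub_C {A : Type*} [CommRing A] [Nontrivial A]
    (x : ℕ → A) (j : ℕ) :
    (∏ i ∈ Finset.range j, (X - C (x i))).natDegree = j := by
  simp [natDegree_prod_of_monic _ _ fun i _ => monic_X_sub_C (x i)]

theorem Submodule.forall_sum_coeff_smul_mem_iff {R M : Type*} [CommRing R] [AddCommGroup M]
    [Module R M] (N : Submodule R M) {Q : ℕ → R[X]} (hQ : ∀ j, (Q j).Monic)
    (hQdeg : ∀ j, (Q j).natDegree = j) (c : ℕ → M) (n : ℕ) :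
    (∀ m, ∑ j ∈ Finset.range n, (Q j).coeff m • c j ∈ N) ↔ ∀ j < n, c j ∈ N := by
  refine ⟨fun h => ?_, fun h m =>
    N.sum_mem fun j hj => N.smul_mem _ (h j (Finset.mem_range.1 hj))⟩
  induction n with
  | zero => simp
  | succ n ih =>
    have hlast : c n ∈ N := by
      have hlow : ∀ j ∈ Finset.range n, (Q j).coeff n • c j = 0 := fun j hj => by
        rw [coeff_eq_zero_of_natDegree_lt (by simpa [hQdeg] using hj), zero_smul]
      have hlead : (Q n).coeff n = 1 := by simpa [hQdeg] using (hQ n).coeff_natDegree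
      simpa [Finset.sum_range_succ, Finset.sum_eq_zero hlow, hlead] using h n
    have hinit := ih fun m => by
      simpa [Finset.sum_range_succ] using N.sub_mem (h m) (N.smul_mem ((Q n).coeff m) hlast)
    intro j hj
    rcases Nat.lt_succ_iff_lt_or_eq.1 hj with hj | rfl
    exacts [hinit j hj, hlast]

section DividedDifferences

variable {D A : Type*} [CommRing D] [CommRing A] [Algebra D A]
  {Φ : ∀ k : ℕ, D[X] → MvPolynomial (Fin (k + 1)) D}

theorem IsDivDiff.aeval_eq_sum_add (hΦ : IsDivDiff D Φ) (g : D[X]) (x : ℕ → A) (z : A)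
    (k : ℕ) :
    aeval z g = ∑ j ∈ Finset.range k,
        MvPolynomial.aeval (fun i : Fin (j + 1) => x i) (Φ j g) *
          ∏ i ∈ Finset.range j, (z - x i) +
      MvPolynomial.aeval (fun i : Fin (k + 1) => if (i : ℕ) < k then x i else z) (Φ k g) *
        ∏ i ∈ Finset.range k, (z - x i) := by
  induction k with
  | zero => simp [hΦ.1, ← Polynomial.aeval_algHom_apply]
  | succ k ih =>
    have hrec := congrArg (MvPolynomial.aeval
      (fun i : Fin (k + 2) => if (i : ℕ) < k + 1 then x i else z)) (hΦ.2 k g)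
    have hrename : (fun i : Fin (k + 2) => if (i : ℕ) < k + 1 then x i else z) ∘
        (fun i => if i = Fin.last k then Fin.last (k + 1) else Fin.castSucc i) =
        fun i : Fin (k + 1) => if (i : ℕ) < k then x i else z := by
      ext i
      by_cases h : i = Fin.last k
      · simp [h]
      · have hi : (i : ℕ) < k := Fin.val_lt_last h
        simp only [Function.comp_apply, h, if_false, Fin.val_castSucc, hi, if_true,
          Nat.lt_succ_of_lt hi]
    have hcast : (fun i : Fin (k + 2) => if (i : ℕ) < k + 1 then x i else z) ∘ Fin.castSucc =
        fun i : Fin (k + 1) => x i := by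
      ext i
      simp only [Function.comp_apply, Fin.val_castSucc, i.is_lt, if_true]
    simp only [map_mul, map_sub, MvPolynomial.aeval_X, MvPolynomial.aeval_rename, hrename, hcast,
      Fin.val_castSucc, Fin.val_last, lt_add_one, lt_irrefl, if_true, if_false] at hrec
    rw [Finset.prod_range_succ, Finset.sum_range_succ, ih]
    linear_combination (∏ i ∈ Finset.range k, (z - x i)) * hrec

theorem IsDivDiff.map_modByMonic_eq_sum [Nontrivial A] (hΦ : IsDivDiff D Φ) (g : D[X])
    {p : D[X]} (hp : p.Monic) {x : ℕ → A}
    (hx : p.map (algebraMap D A) = ∏ i ∈ Finset.range p.natDegree, (X - C (x i))) :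
    (g %ₘ p).map (algebraMap D A) = ∑ j ∈ Finset.range p.natDegree,
      C (MvPolynomial.aeval (fun i : Fin (j + 1) => x i) (Φ j g)) *
        ∏ i ∈ Finset.range j, (X - C (x i)) := by
  have hnewton := hΦ.aeval_eq_sum_add g (fun i => C (x i)) (X : A[X]) p.natDegree
  have hC : ∀ j (y : Fin (j + 1) → A),
      MvPolynomial.aeval (fun i => C (y i)) (Φ j g) = C (MvPolynomial.aeval y (Φ j g)) :=
    fun j y =>
      (MvPolynomial.comp_aeval_apply (f := y) ((Algebra.ofId A A[X]).restrictScalars D) _).symm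
  rw [← aeval_map_algebraMap A, aeval_X_left_apply, ← hx] at hnewton
  simp only [hC] at hnewton
  have hlt : ∑ j ∈ Finset.range p.natDegree,
      C (MvPolynomial.aeval (fun i : Fin (j + 1) => x i) (Φ j g)) *
        ∏ i ∈ Finset.range j, (X - C (x i)) ∈ degreeLT A p.natDegree := by
    refine Submodule.sum_mem _ fun j hj => ?_
    rw [C_mul']
    refine Submodule.smul_mem _ _ (mem_degreeLT.2 ?_)
    rw [degree_eq_natDegree (monic_prod_X_sub_C _ _).ne_zero, natDegree_prod_range_X_sub_C]
    exact_mod_cast Finset.mem_range.1 hj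
  rw [mul_comm _ (p.map (algebraMap D A))] at hnewton
  rw [map_modByMonic _ hp]
  refine (div_modByMonic_unique _ _ (hp.map _) ⟨hnewton.symm, ?_⟩).2
  rwa [degree_eq_natDegree (hp.map _).ne_zero, hp.natDegree_map, ← mem_degreeLT]

theorem IsDivDiff.forall_coeff_modByMonic_mem_iff [Nontrivial A] (hΦ : IsDivDiff D Φ)
    (g : D[X]) {p : D[X]} (hp : p.Monic) {x : ℕ → A}
    (hx : p.map (algebraMap D A) = ∏ i ∈ Finset.range p.natDegree, (X - C (x i)))
    (I : Ideal A) :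
    (∀ m, algebraMap D A ((g %ₘ p).coeff m) ∈ I) ↔
      ∀ j < p.natDegree, MvPolynomial.aeval (fun i : Fin (j + 1) => x i) (Φ j g) ∈ I := by
  have hcoeff : ∀ m, algebraMap D A ((g %ₘ p).coeff m) = ∑ j ∈ Finset.range p.natDegree,
      (∏ i ∈ Finset.range j, (X - C (x i))).coeff m •
        MvPolynomial.aeval (fun i : Fin (j + 1) => x i) (Φ j g) := fun m => by
    rw [← coeff_map, hΦ.map_modByMonic_eq_sum g hp hx, finsetSum_coeff]
    exact Finset.sum_congr rfl fun j _ => by rw [coeff_C_mul, smul_eq_mul, mul_comm]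
  simp only [hcoeff]
  exact Submodule.forall_sum_coeff_smul_mem_iff I (fun j => monic_prod_X_sub_C _ _)
    (natDegree_prod_range_X_sub_C x) _ _

theorem IsDivDiff.forall_coeff_modByMonic_mem_iff_forall_injective [Nontrivial A]
    (hΦ : IsDivDiff D Φ) (g : D[X]) {p : D[X]} (hp : p.Monic) {β : Fin p.natDegree → A}
    (hβ : p.map (algebraMap D A) = ∏ i, (X - C (β i))) (I : Ideal A) :
    (∀ m, algebraMap D A ((g %ₘ p).coeff m) ∈ I) ↔
      ∀ k < p.natDegree, ∀ ι : Fin (k + 1) → Fin p.natDegree, Function.Injective ι →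
        MvPolynomial.aeval (β ∘ ι) (Φ k g) ∈ I := by
  have hperm (σ : Equiv.Perm (Fin p.natDegree)) :
      (∀ m, algebraMap D A ((g %ₘ p).coeff m) ∈ I) ↔
        ∀ j (hj : j < p.natDegree), MvPolynomial.aeval (β ∘ σ ∘ Fin.castLE hj) (Φ j g) ∈ I := by
    have hext := Fin.val_injective.extend_apply (β ∘ σ) (0 : ℕ → A)
    refine (hΦ.forall_coeff_modByMonic_mem_iff g hp (x := Function.extend Fin.val (β ∘ σ) 0)
      ?_ I).trans (forall₂_congr fun j hj => ?_)
    · rw [hβ, ← Equiv.prod_comp σ, ← Fin.prod_univ_eq_prod_range]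
      simp [hext]
    · have hfun : (fun i : Fin (j + 1) => Function.extend Fin.val (β ∘ σ) 0 i) =
          β ∘ σ ∘ Fin.castLE hj := funext fun i => hext (Fin.castLE hj i)
      rw [hfun]
  constructor
  · intro h k hk ι hι
    obtain ⟨σ, hσ⟩ := Equiv.Perm.exists_extending_pair _ _ (Fin.castLE_injective hk) hι
    simpa [Function.comp_def, hσ] using (hperm σ).1 h k hk
  · exact fun h => (hperm 1).2 fun j hj => h j hj _ (Fin.castLE_injective hj)

end DividedDifferences

namespace AdjoinRoot

variable {R : Type*} [CommRing R] {p : R[X]}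

theorem minpoly_root_of_monic_s9 (hp : p.Monic) : minpoly R (root p) = p := by
  refine (minpoly.unique' R (root p) hp (by rw [aeval_eq, mk_self]) fun q hq => ?_).symm
  rw [or_iff_not_imp_left, aeval_eq, ne_eq, mk_eq_zero]
  exact fun hq0 => hp.not_dvd_of_degree_lt hq0 hq

theorem charpoly_leftMulMatrix_root (hp : p.Monic) :
    (Algebra.leftMulMatrix (powerBasisAux' hp) (root p)).charpoly = p :=
  (charpoly_leftMulMatrix (powerBasis' hp)).trans (minpoly_root_of_monic_s9 hp)

theorem leftMulMatrix_mk_apply (hp : p.Monic) (g : R[X]) (i j : Fin p.natDegree) :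
    Algebra.leftMulMatrix (powerBasisAux' hp) (mk p g) i j = (g * X ^ (j : ℕ) %ₘ p).coeff i := by
  rw [Algebra.leftMulMatrix_eq_repr_mul, powerBasisAux'_repr_apply_to_fun,
    show powerBasisAux' hp j = root p ^ (j : ℕ) from (powerBasis' hp).basis_eq_pow j,
    ← mk_X, ← map_pow, ← map_mul, modByMonicHom_mk]

end AdjoinRoot

theorem Matrix.forall_charpoly_eq_dvd_aeval_apply_iff {R : Type*} [CommRing R] {p : R[X]}
    (hp : p.Monic) (g : R[X]) (d : R) :
    (∀ M : Matrix (Fin p.natDegree) (Fin p.natDegree) R, M.charpoly = p →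
      ∀ i j, d ∣ aeval M g i j) ↔ ∀ m, d ∣ (g %ₘ p).coeff m := by
  refine ⟨fun h m => ?_, fun h M hM i j => ?_⟩
  · nontriviality R
    by_cases hm : m < p.natDegree
    · have := h _ (AdjoinRoot.charpoly_leftMulMatrix_root hp) ⟨m, hm⟩ ⟨0, by omega⟩
      rwa [aeval_algHom_apply, AdjoinRoot.aeval_eq, AdjoinRoot.leftMulMatrix_mk_apply, pow_zero,
        mul_one] at this
    · rw [coeff_eq_zero_of_degree_lt ((degree_modByMonic_lt g hp).trans_le _)]
      · exact dvd_zero d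
      · rw [degree_eq_natDegree hp.ne_zero]; exact_mod_cast not_lt.1 hm
  · obtain ⟨q, hq⟩ := (C_dvd_iff_dvd_coeff d _).2 h
    rw [← aeval_modByMonic_eq_self_of_root (hM ▸ aeval_self_charpoly M), hq, map_mul, aeval_C,
      ← Algebra.smul_def, Matrix.smul_apply, smul_eq_mul]
    exact dvd_mul_right d _

theorem Matrix.aeval_map_map_algebraMap {D K ι : Type*} [CommRing D] [CommRing K]
    [Algebra D K] [Fintype ι] [DecidableEq ι] (M : Matrix ι ι D) (g : D[X]) :
    aeval (M.map (algebraMap D K)) (g.map (algebraMap D K)) = (aeval M g).map (algebraMap D K) := by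
  rw [aeval_map_algebraMap]
  exact aeval_algHom_apply ((Algebra.ofId D K).mapMatrix) M g

theorem Matrix.exists_algebraMap_eq_aeval_apply_iff_dvd {D K ι : Type*} [CommRing D] [Field K]
    [Algebra D K] [FaithfulSMul D K] [Fintype ι] [DecidableEq ι] {d : D} (hd : d ≠ 0) {f : K[X]}
    {g : D[X]} (hf : f * C (algebraMap D K d) = g.map (algebraMap D K)) (M : Matrix ι ι D)
    (i j : ι) :
    (∃ c, algebraMap D K c = aeval (M.map (algebraMap D K)) f i j) ↔ d ∣ aeval M g i j := by
  have hinj := FaithfulSMul.algebraMap_injective D K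
  have hentry : algebraMap D K (aeval M g i j) =
      algebraMap D K d * aeval (M.map (algebraMap D K)) f i j := by
    have := congrArg (aeval (M.map (algebraMap D K))) hf
    rw [map_mul, aeval_C, ← Algebra.commutes, ← Algebra.smul_def, aeval_map_map_algebraMap] at this
    simpa using (congrFun₂ this i j).symm
  constructor
  · rintro ⟨c, hc⟩
    exact ⟨c, hinj (by rw [hentry, map_mul, hc])⟩
  · rintro ⟨c, hc⟩
    refine ⟨c, mul_left_cancel₀ ((map_ne_zero_iff _ hinj).2 hd) ?_⟩
    rw [← map_mul, ← hc, hentry]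

theorem IsIntegrallyClosed.algebraMap_dvd_algebraMap_integralClosure_iff {D K F : Type*}
    [CommRing D] [IsDomain D] [IsIntegrallyClosed D] [Field K] [Algebra D K] [IsFractionRing D K]
    [CommRing F] [Nontrivial F] [Algebra K F] [Algebra D F] [IsScalarTower D K F] {d : D}
    (hd : d ≠ 0) (x : D) :
    algebraMap D (integralClosure D F) d ∣ algebraMap D (integralClosure D F) x ↔ d ∣ x := by
  refine ⟨fun ⟨t, ht⟩ => ?_, map_dvd _⟩
  have hdK : algebraMap D K d ≠ 0 := (map_ne_zero_iff _ (IsFractionRing.injective D K)).2 hd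
  have hκ : algebraMap K F (algebraMap D K x / algebraMap D K d) = t := by
    refine ((hdK.isUnit.map (algebraMap K F)).mul_left_cancel ?_)
    rw [← map_mul, mul_div_cancel₀ _ hdK, ← IsScalarTower.algebraMap_apply,
      ← IsScalarTower.algebraMap_apply]
    exact congrArg Subtype.val ht
  obtain ⟨c, hc⟩ := IsIntegrallyClosed.isIntegral_iff.1
    ((isIntegral_algebraMap_iff (algebraMap K F).injective).1 (hκ ▸ t.2))
  exact ⟨c, IsFractionRing.injective D K (by rw [map_mul, hc, mul_div_cancel₀ _ hdK])⟩

theorem Subalgebra.dvd_iff_exists_mem {R A : Type*} [CommSemiring R] [CommSemiring A]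
    [Algebra R A] {S : Subalgebra R A} {a b : S} : a ∣ b ↔ ∃ t ∈ S, (b : A) = a * t :=
  ⟨fun ⟨t, ht⟩ => ⟨t, t.2, congrArg Subtype.val ht⟩,
    fun ⟨t, ht, h⟩ => ⟨⟨t, ht⟩, Subtype.ext h⟩⟩

theorem mem_intOn_charpoly_iff_divDiff_integral_general (D K F : Type*) [CommRing D] [IsDomain D]
    [IsIntegrallyClosed D] [Field K] [Algebra D K] [IsFractionRing D K]
    [Field F] [Algebra K F] [Algebra D F] [IsScalarTower D K F]
    (Φ : ∀ k : ℕ, Polynomial D → MvPolynomial (Fin (k + 1)) D) (hΦ : IsDivDiff D Φ)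
    (n : ℕ) (p : D[X]) (hp : p.Monic) (hdeg : p.natDegree = n)
    (α : Fin n → F) (hα : p.map (algebraMap D F) = ∏ i, (X - C (α i)))
    (g : D[X]) (d : D) (hd : d ≠ 0) (f : K[X])
    (hf : f * C (algebraMap D K d) = g.map (algebraMap D K)) :
    f ∈ IntOn D K {M : Matrix (Fin n) (Fin n) D | M.charpoly = p} ↔
      ∀ k, (hk : k < n) → ∀ ι : Fin (k + 1) → Fin n, Function.Injective ι →
        ∃ t ∈ integralClosure D F,
          MvPolynomial.aeval (fun i => α (ι i)) (Φ k g) = algebraMap D F d * t := by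
  subst hdeg
  have hαint (i : Fin p.natDegree) : α i ∈ integralClosure D F := ⟨p, hp, by
    rw [← aeval_def, ← eval_map_algebraMap, hα, eval_prod]
    exact Finset.prod_eq_zero (Finset.mem_univ i) (by simp)⟩
  let β : Fin p.natDegree → integralClosure D F := fun i => ⟨α i, hαint i⟩
  have hβ : p.map (algebraMap D (integralClosure D F)) = ∏ i, (X - C (β i)) :=
    map_injective (algebraMap (integralClosure D F) F) Subtype.val_injective (by
      simpa [map_map, ← IsScalarTower.algebraMap_eq, Polynomial.map_prod] using hα)
  calc f ∈ IntOn D K {M : Matrix (Fin p.natDegree) (Fin p.natDegree) D | M.charpoly = p}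
      ↔ ∀ m, d ∣ (g %ₘ p).coeff m := by
        rw [← Matrix.forall_charpoly_eq_dvd_aeval_apply_iff hp]
        exact forall₂_congr fun M _ => forall₂_congr fun i j =>
          Matrix.exists_algebraMap_eq_aeval_apply_iff_dvd hd hf M i j
    _ ↔ ∀ m, algebraMap D (integralClosure D F) ((g %ₘ p).coeff m) ∈
          Ideal.span {algebraMap D (integralClosure D F) d} := by
        simp only [Ideal.mem_span_singleton,
          IsIntegrallyClosed.algebraMap_dvd_algebraMap_integralClosure_iff (K := K) hd]
    _ ↔ _ := hΦ.forall_coeff_modByMonic_mem_iff_forall_injective g hp hβ _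
    _ ↔ _ := forall₂_congr fun k _ => forall₂_congr fun ι _ => by
        have hval : (MvPolynomial.aeval (β ∘ ι) (Φ k g) : F) =
            MvPolynomial.aeval (fun i => α (ι i)) (Φ k g) :=
          MvPolynomial.comp_aeval_apply (f := β ∘ ι) (integralClosure D F).val _
        rw [Ideal.mem_span_singleton, Subalgebra.dvd_iff_exists_mem, hval]
        rfl

/-- Let `D` be an integrally closed domain with quotient field `K`, `g ∈ D[X]`,
`d ∈ D \ {0}` and `p ∈ D[X]` monic of degree `n`.  Let `α₁,…,αₙ` be the roots of `p` (with
multiplicity) in a splitting field `F` of `p` over `K`, and `D_F` the integral closure of `D`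
in `F`.  Then `f = g/d ∈ Int(Mₙᵖ(D), Mₙ(D))` iff for every `0 ≤ k < n` and every choice of
`k+1` distinct indices `i₀,…,i_k ∈ {1,…,n}`, the value `Φᵏ(g)(α_{i₀},…,α_{i_k})` lies in
`d·D_F`. -/
theorem mem_intOn_charpoly_iff_divDiff_integral (D K F : Type*) [CommRing D] [IsDomain D]
    [IsIntegrallyClosed D] [Field K] [Algebra D K] [IsFractionRing D K]
    [Field F] [Algebra K F] [Algebra D F] [IsScalarTower D K F]
    (Φ : ∀ k : ℕ, Polynomial D → MvPolynomial (Fin (k + 1)) D) (hΦ : IsDivDiff D Φ)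
    (n : ℕ) (hn : 0 < n) (p : D[X]) (hp : p.Monic) (hdeg : p.natDegree = n)
    (hF : Polynomial.IsSplittingField K F (p.map (algebraMap D K)))
    (α : Fin n → F) (hα : p.map (algebraMap D F) = ∏ i, (X - C (α i)))
    (g : D[X]) (d : D) (hd : d ≠ 0) (f : K[X])
    (hf : f * C (algebraMap D K d) = g.map (algebraMap D K)) :
    f ∈ IntOn D K {M : Matrix (Fin n) (Fin n) D | M.charpoly = p} ↔
      ∀ k, (hk : k < n) → ∀ ι : Fin (k + 1) → Fin n, Function.Injective ι →
        ∃ t ∈ integralClosure D F,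
          MvPolynomial.aeval (fun i => α (ι i)) (Φ k g) = algebraMap D F d * t :=
  mem_intOn_charpoly_iff_divDiff_integral_general D K F Φ hΦ n p hp hdeg α hα g d hd f hf
end

section
/- Let D be an integral domain with quotient field K, n a positive integer, and P a set of monic polynomials in D[X] of degree n, each of which splits into linear factors over D. Let f = g/d ∈ K[X] with g ∈ D[X] and d ∈ D \ {0}. Then f belongs to Int(Tₙ^P(D), Mₙ(D)) if and only if for every p ∈ P, g lies in the ideal of D[X] generated by d and p. In particular, Int(Tₙ^P(D), Mₙ(D)) = Int(Mₙ^P(D), Mₙ(D)). -/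
/-!
For `p = ∏ (X - aᵢ)` let `T` be the lower bidiagonal matrix with diagonal `a` and ones just
below it. Then `∏_{i<m} (X - aᵢ)` sends `e₀` to `e_m`, so the first column of `q(T)` records the
coefficients of `q` in the Newton basis of `a`; `d` divides all of them iff `q ∈ (d, p)`.
Conversely, if `g = d u + p v` and `p` is the characteristic polynomial of `M`, Cayley–Hamilton
gives `f(M) = u(M)`, a matrix over `D`.
-/

open Polynomial

open Matrix

namespace Matrix

variable {R ι : Type*} [CommRing R] [Fintype ι] [LinearOrder ι]

theorem IsLowerTriangular.mul_apply_self {A B : Matrix ι ι R} (hA : A.IsLowerTriangular)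
    (hB : B.IsLowerTriangular) (i : ι) : (A * B) i i = A i i * B i i := by
  rw [mul_apply, Finset.sum_eq_single i]
  · intro k _ hk
    rcases hk.lt_or_gt with h | h
    · rw [hB h, mul_zero]
    · rw [hA h, zero_mul]
  · simp

variable [DecidableEq ι] {M : Matrix ι ι R}

theorem IsLowerTriangular.aeval (hM : M.IsLowerTriangular) (q : R[X]) :
    (Polynomial.aeval M q).IsLowerTriangular := by
  rw [← aeval_subalgebra_coe q (blockTriangularSubalgebra R R OrderDual.toDual) ⟨M, hM⟩]
  exact (Polynomial.aeval (⟨M, hM⟩ : blockTriangularSubalgebra R R OrderDual.toDual) q).2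

theorem IsLowerTriangular.aeval_apply_self (hM : M.IsLowerTriangular) (q : R[X]) (i : ι) :
    Polynomial.aeval M q i i = q.eval (M i i) := by
  induction q using Polynomial.induction_on with
  | C c => simp [algebraMap_matrix_apply]
  | add p q hp hq => simp [hp, hq]
  | monomial k c ih =>
    rw [pow_succ, ← mul_assoc, map_mul, aeval_X,
      (hM.aeval _).mul_apply_self hM, ih]
    simp [mul_assoc]

theorem IsLowerTriangular.charpoly (hM : M.IsLowerTriangular) :
    M.charpoly = ∏ i, (X - C (M i i)) := by
  simp [Matrix.charpoly, det_of_isLowerTriangular _ hM.charmatrix]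

end Matrix

section LowerBidiagonal

variable {D : Type*} [CommRing D] {n : ℕ}

def lowerBidiagonal (a : ℕ → D) : Matrix (Fin n) (Fin n) D :=
  of fun i j => if i = j then a i else if (i : ℕ) = j + 1 then 1 else 0

theorem lowerBidiagonal_isLowerTriangular (a : ℕ → D) :
    (lowerBidiagonal a : Matrix (Fin n) (Fin n) D).IsLowerTriangular := by
  intro i j (hij : i < j)
  have : (i : ℕ) ≠ j + 1 := by omega
  simp [lowerBidiagonal, hij.ne, this]

theorem charpoly_lowerBidiagonal (a : ℕ → D) :
    (lowerBidiagonal a : Matrix (Fin n) (Fin n) D).charpoly =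
      ∏ i ∈ Finset.range n, (X - C (a i)) := by
  rw [(lowerBidiagonal_isLowerTriangular a).charpoly, ← Fin.prod_univ_eq_prod_range]
  simp [lowerBidiagonal]

/-- The `m`-th standard basis vector; it is `0` for `m ≥ n`, so that
`aeval_lowerBidiagonal_X_sub_C_mulVec` holds for every `m`. -/
def unitVec (m : ℕ) : Fin n → D := fun k => if (k : ℕ) = m then 1 else 0

theorem mulVec_unitVec_apply (A : Matrix (Fin n) (Fin n) D) {m : ℕ} (hm : m < n) (k : Fin n) :
    (A *ᵥ unitVec m) k = A k ⟨m, hm⟩ := by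
  have hval (j : Fin n) : ((j : ℕ) = m) = (j = ⟨m, hm⟩) := by simp [Fin.ext_iff]
  simp [mulVec, dotProduct, unitVec, hval]

theorem aeval_lowerBidiagonal_X_sub_C_mulVec (a : ℕ → D) (m : ℕ) :
    aeval (lowerBidiagonal a) (X - C (a m)) *ᵥ unitVec m = (unitVec (m + 1) : Fin n → D) := by
  by_cases hm : m < n
  · ext k
    rw [mulVec_unitVec_apply _ hm]
    by_cases hk : (k : ℕ) = m <;>
      simp [lowerBidiagonal, unitVec, Fin.ext_iff, algebraMap_matrix_apply, hk]
  · have hzero (l : ℕ) (hl : n ≤ l) : (unitVec l : Fin n → D) = 0 := by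
      ext k; simp [unitVec]; omega
    rw [hzero m (by omega), hzero (m + 1) (by omega), mulVec_zero]

theorem aeval_lowerBidiagonal_prod_mulVec (a : ℕ → D) (m : ℕ) :
    aeval (lowerBidiagonal a) (∏ i ∈ Finset.range m, (X - C (a i))) *ᵥ unitVec 0 =
      (unitVec m : Fin n → D) := by
  induction m with
  | zero => simp
  | succ m ih =>
    rw [Finset.prod_range_succ, mul_comm, map_mul, ← mulVec_mulVec, ih,
      aeval_lowerBidiagonal_X_sub_C_mulVec]

theorem mem_span_C_X_sub_C_of_dvd_eval {d a : D} {v : D[X]} (h : d ∣ v.eval a) :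
    v ∈ Ideal.span {C d, X - C a} := by
  obtain ⟨e, he⟩ := h
  refine Ideal.mem_span_pair.mpr ⟨C e, v /ₘ (X - C a), ?_⟩
  conv_rhs => rw [← modByMonic_add_div v (X - C a), modByMonic_X_sub_C_eq_C_eval, he]
  rw [C_mul]
  ring

theorem mem_span_C_prod_of_dvd_aeval_lowerBidiagonal_mulVec (a : ℕ → D) (d : D) {m : ℕ}
    (hm : m ≤ n) {q : D[X]}
    (hq : ∀ k, d ∣ (aeval (lowerBidiagonal a : Matrix (Fin n) (Fin n) D) q *ᵥ unitVec 0) k) :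
    q ∈ Ideal.span {C d, ∏ i ∈ Finset.range m, (X - C (a i))} := by
  induction m with
  | zero => exact Ideal.mem_span_pair.mpr ⟨0, q, by simp⟩
  | succ m ih =>
    obtain ⟨u, v, rfl⟩ := Ideal.mem_span_pair.mp (ih (by omega))
    set T : Matrix (Fin n) (Fin n) D := lowerBidiagonal a
    have hcol : aeval T (u * C d + v * ∏ i ∈ Finset.range m, (X - C (a i))) *ᵥ unitVec 0 =
        d • (aeval T u *ᵥ unitVec 0) + aeval T v *ᵥ unitVec m := by
      rw [map_add, map_mul, map_mul, aeval_C, add_mulVec, ← mulVec_mulVec, ← mulVec_mulVec,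
        aeval_lowerBidiagonal_prod_mulVec, Algebra.algebraMap_eq_smul_one, smul_mulVec,
        one_mulVec, mulVec_smul]
    have hdvd : d ∣ v.eval (a m) := by
      have := hq ⟨m, hm⟩
      rw [hcol, Pi.add_apply, Pi.smul_apply, smul_eq_mul, dvd_add_right (dvd_mul_right _ _),
        mulVec_unitVec_apply _ hm, (lowerBidiagonal_isLowerTriangular a).aeval_apply_self] at this
      simpa [T, lowerBidiagonal] using this
    obtain ⟨u', w, hv⟩ := Ideal.mem_span_pair.mp (mem_span_C_X_sub_C_of_dvd_eval hdvd)
    rw [Finset.prod_range_succ, ← hv]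
    exact Ideal.mem_span_pair.mpr ⟨u + u' * ∏ i ∈ Finset.range m, (X - C (a i)), w, by ring⟩

end LowerBidiagonal

section IntegerValued

variable {D K : Type*} [CommRing D] [Field K] [Algebra D K]

theorem IntOn.anti {n : ℕ} {S T : Set (Matrix (Fin n) (Fin n) D)} (h : S ⊆ T) :
    IntOn D K T ⊆ IntOn D K S :=
  fun _ hf M hM => hf M (h hM)

theorem aeval_map_algebraMap_map {ι : Type*} [Fintype ι] [DecidableEq ι] (M : Matrix ι ι D)
    (q : D[X]) :
    aeval (M.map (algebraMap D K)) (q.map (algebraMap D K)) = (aeval M q).map (algebraMap D K) :=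
  (map_aeval_eq_aeval_map (ψ := (algebraMap D K).mapMatrix)
    (by ext x i j; by_cases h : i = j <;> simp [algebraMap_matrix_apply, h]) q M).symm

theorem algebraMap_smul_aeval_map {ι : Type*} [Fintype ι] [DecidableEq ι] {f : K[X]} {g : D[X]}
    {d : D} (hf : f * C (algebraMap D K d) = g.map (algebraMap D K)) (M : Matrix ι ι D) :
    algebraMap D K d • aeval (M.map (algebraMap D K)) f = (aeval M g).map (algebraMap D K) := by
  rw [← aeval_map_algebraMap_map, ← hf, map_mul, aeval_C, ← Algebra.commutes, Algebra.smul_def]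

variable [IsFractionRing D K]

theorem exists_mul_C_algebraMap_eq_map (f : K[X]) :
    ∃ (g : D[X]) (d : D), d ≠ 0 ∧ f * C (algebraMap D K d) = g.map (algebraMap D K) := by
  obtain ⟨d, hd, hg⟩ := IsLocalization.integerNormalization_spec (nonZeroDivisors D) f
  have := (algebraMap D K).domain_nontrivial
  refine ⟨IsLocalization.integerNormalization (nonZeroDivisors D) f, d,
    nonZeroDivisors.ne_zero hd, ?_⟩
  rw [hg, ← IsScalarTower.algebraMap_smul K d f, smul_eq_C_mul, mul_comm]

variable {n : ℕ} {f : K[X]} {g : D[X]} {d : D}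

theorem mem_intOn_charpoly_of_forall_mem_span {P : Set D[X]} (hd : d ≠ 0)
    (hf : f * C (algebraMap D K d) = g.map (algebraMap D K))
    (h : ∀ p ∈ P, g ∈ Ideal.span {C d, p}) :
    f ∈ IntOn D K {M : Matrix (Fin n) (Fin n) D | M.charpoly ∈ P} := by
  intro M hM i j
  obtain ⟨u, v, huv⟩ := Ideal.mem_span_pair.mp (h _ hM)
  have hg : aeval M g = d • aeval M u := by
    rw [← huv, map_add, map_mul, map_mul, aeval_C, aeval_self_charpoly, mul_zero, add_zero,
      Algebra.algebraMap_eq_smul_one, mul_smul_comm, mul_one]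
  refine ⟨aeval M u i j,
    mul_left_cancel₀ ((map_ne_zero_iff _ (IsFractionRing.injective D K)).mpr hd) ?_⟩
  simpa [hg] using (congrFun₂ (algebraMap_smul_aeval_map hf M) i j).symm

theorem mem_span_of_mem_intOn_lowerBidiagonal (hn : 0 < n) (a : ℕ → D)
    (hf : f * C (algebraMap D K d) = g.map (algebraMap D K))
    (h : f ∈ IntOn D K {(lowerBidiagonal a : Matrix (Fin n) (Fin n) D)}) :
    g ∈ Ideal.span {C d, ∏ i ∈ Finset.range n, (X - C (a i))} := by
  refine mem_span_C_prod_of_dvd_aeval_lowerBidiagonal_mulVec a d le_rfl fun k => ?_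
  obtain ⟨c, hc⟩ := h _ rfl k ⟨0, hn⟩
  refine ⟨c, IsFractionRing.injective D K ?_⟩
  rw [mulVec_unitVec_apply _ hn, map_mul, hc]
  simpa using (congrFun₂ (algebraMap_smul_aeval_map hf (lowerBidiagonal a)) k ⟨0, hn⟩).symm

theorem forall_mem_span_of_mem_intOn_lowerTriangular (hn : 0 < n) {P : Set D[X]}
    (hP : ∀ p ∈ P, ∃ a : Fin n → D, p = ∏ i, (X - C (a i)))
    (hf : f * C (algebraMap D K d) = g.map (algebraMap D K))
    (h : f ∈ IntOn D K {M : Matrix (Fin n) (Fin n) D | M.IsLowerTriangular ∧ M.charpoly ∈ P}) :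
    ∀ p ∈ P, g ∈ Ideal.span {C d, p} := by
  intro p hp
  obtain ⟨a, rfl⟩ := hP p hp
  let b : ℕ → D := fun i => if hi : i < n then a ⟨i, hi⟩ else 0
  have hb : ∏ i, (X - C (a i)) = ∏ i ∈ Finset.range n, (X - C (b i)) := by
    rw [← Fin.prod_univ_eq_prod_range]
    simp [b]
  have hT : lowerBidiagonal b ∈
      {M : Matrix (Fin n) (Fin n) D | M.IsLowerTriangular ∧ M.charpoly ∈ P} :=
    ⟨lowerBidiagonal_isLowerTriangular b, by rwa [charpoly_lowerBidiagonal, ← hb]⟩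
  rw [hb]
  exact mem_span_of_mem_intOn_lowerBidiagonal hn b hf
    (IntOn.anti (Set.singleton_subset_iff.mpr hT) h)

end IntegerValued

theorem mem_intOn_triangular_charpolySet_iff_general (D K : Type*) [CommRing D] [Field K]
    [Algebra D K] [IsFractionRing D K] (n : ℕ) (hn : 0 < n) (P : Set (Polynomial D))
    (hP : ∀ p ∈ P, ∃ a : Fin n → D, p = ∏ i, (X - C (a i)))
    (g : D[X]) (d : D) (hd : d ≠ 0) (f : K[X])
    (hf : f * C (algebraMap D K d) = g.map (algebraMap D K)) :
    (f ∈ IntOn D K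
        {M : Matrix (Fin n) (Fin n) D | (∀ i j, i < j → M i j = 0) ∧ M.charpoly ∈ P} ↔
      ∀ p ∈ P, g ∈ Ideal.span {Polynomial.C d, p}) ∧
    IntOn D K {M : Matrix (Fin n) (Fin n) D | (∀ i j, i < j → M i j = 0) ∧ M.charpoly ∈ P} =
      IntOn D K {M : Matrix (Fin n) (Fin n) D | M.charpoly ∈ P} := by
  have hsub : IntOn D K {M : Matrix (Fin n) (Fin n) D | M.charpoly ∈ P} ⊆
      IntOn D K {M | M.IsLowerTriangular ∧ M.charpoly ∈ P} :=
    IntOn.anti fun _ hM => hM.2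
  refine ⟨⟨forall_mem_span_of_mem_intOn_lowerTriangular hn hP hf,
    fun h => hsub (mem_intOn_charpoly_of_forall_mem_span hd hf h)⟩,
    hsub.antisymm' fun f' hf' => ?_⟩
  obtain ⟨g', d', hd', hf''⟩ := exists_mul_C_algebraMap_eq_map (D := D) f'
  exact mem_intOn_charpoly_of_forall_mem_span hd' hf''
    (forall_mem_span_of_mem_intOn_lowerTriangular hn hP hf'' hf')

/-- Let `D` be a domain with quotient field `K`, `n` positive, and `P` a set
of monic polynomials in `D[X]` of degree `n`, each totally split over `D`.  Let
`f = g/d ∈ K[X]` with `g ∈ D[X]`, `d ∈ D \ {0}`.  Then `f ∈ Int(Tₙ^P(D), Mₙ(D))` iff for every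
`p ∈ P`, `g` lies in the ideal of `D[X]` generated by `d` and `p`.  In particular
`Int(Tₙ^P(D), Mₙ(D)) = Int(Mₙ^P(D), Mₙ(D))`. -/
theorem mem_intOn_triangular_charpolySet_iff (D K : Type*) [CommRing D] [IsDomain D] [Field K]
    [Algebra D K] [IsFractionRing D K] (n : ℕ) (hn : 0 < n) (P : Set (Polynomial D))
    (hP : ∀ p ∈ P, ∃ a : Fin n → D, p = ∏ i, (X - C (a i)))
    (g : D[X]) (d : D) (hd : d ≠ 0) (f : K[X])
    (hf : f * C (algebraMap D K d) = g.map (algebraMap D K)) :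
    (f ∈ IntOn D K
        {M : Matrix (Fin n) (Fin n) D | (∀ i j, i < j → M i j = 0) ∧ M.charpoly ∈ P} ↔
      ∀ p ∈ P, g ∈ Ideal.span {Polynomial.C d, p}) ∧
    IntOn D K {M : Matrix (Fin n) (Fin n) D | (∀ i j, i < j → M i j = 0) ∧ M.charpoly ∈ P} =
      IntOn D K {M : Matrix (Fin n) (Fin n) D | M.charpoly ∈ P} :=
  mem_intOn_triangular_charpolySet_iff_general D K n hn P hP g d hd f hf
end

section
/- Let D be an integrally closed domain with quotient field K and n a positive integer. Then Int(Mₙ(D)) is contained in Int^{\{n−1\}}(D), the ring of polynomials f ∈ K[X] such that for every k with 0 ≤ k < n, the k-th divided difference Φᵏ(f) maps D^{k+1} into D; that is, every polynomial that is integer-valued on Mₙ(D) has all its divided differences of order less than n integer-valued on tuples of elements of D. -/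
open Polynomial

section DivDiffAux


noncomputable def Hh (K : Type*) [CommRing K] : (k : ℕ) → ℕ → MvPolynomial (Fin (k + 1)) K
  | _, 0 => 1
  | 0, (d+1) => MvPolynomial.X 0 * Hh K 0 d
  | (k+1), (d+1) => MvPolynomial.X (Fin.last (k+1)) * Hh K (k+1) d
      + MvPolynomial.rename Fin.castSucc (Hh K k (d+1))
  termination_by k d => (k, d)

variable {K : Type*} [CommRing K]

@[simp] lemma Hh_zero (k : ℕ) : Hh K k 0 = 1 := by cases k <;> rw [Hh]

lemma Hh_zero_left (d : ℕ) : Hh K 0 d = MvPolynomial.X 0 ^ d := by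
  induction d with
  | zero => simp
  | succ d ih => rw [Hh, ih]; ring

lemma Hh_succ_succ (k d : ℕ) :
    Hh K (k+1) (d+1) = MvPolynomial.X (Fin.last (k+1)) * Hh K (k+1) d
      + MvPolynomial.rename Fin.castSucc (Hh K k (d+1)) := by rw [Hh]

lemma Hh_one (k : ℕ) : Hh K k 1 = ∑ i : Fin (k+1), MvPolynomial.X i := by
  induction k with
  | zero => simp [Hh_zero_left]
  | succ k ih =>
      rw [Hh_succ_succ, ih]
      simp only [map_sum, MvPolynomial.rename_X, Hh_zero, mul_one]
      rw [Fin.sum_univ_castSucc (n := k+1)]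
      ring

def sigk (k : ℕ) : Fin (k+1) → Fin (k+2) :=
  fun i => if i = Fin.last k then Fin.last (k+1) else Fin.castSucc i

lemma Hh_key (k d : ℕ) :
    Hh K (k+1) d * (MvPolynomial.X (Fin.castSucc (Fin.last k))
        - MvPolynomial.X (Fin.last (k+1))) =
      MvPolynomial.rename Fin.castSucc (Hh K k (d+1))
        - MvPolynomial.rename (sigk k) (Hh K k (d+1)) := by
  induction d with
  | zero =>
      rw [Hh_zero, one_mul, Hh_one]
      simp only [map_sum, MvPolynomial.rename_X]
      rw [← Finset.sum_sub_distrib]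
      rw [Finset.sum_eq_single (Fin.last k)]
      · simp [sigk]
      · intro i _ hi
        simp [sigk, hi]
      · simp
  | succ d ih =>
      cases k with
      | zero =>
          rw [Hh_succ_succ, add_mul, mul_assoc, ih, Hh_zero_left, Hh_zero_left]
          simp only [map_pow, MvPolynomial.rename_X]
          have h0 : (Fin.castSucc (0 : Fin 1)) = Fin.castSucc (Fin.last 0) := rfl
          have h1 : sigk 0 0 = Fin.last 1 := by simp [sigk]
          rw [h1]
          ring_nf
          rw [show ((0:Fin 1).castSucc) = Fin.castSucc (Fin.last 0) from rfl]
          ring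
      | succ k =>
          rw [Hh_succ_succ, add_mul, mul_assoc, ih]
          conv_rhs => rw [Hh_succ_succ]
          simp only [map_add, map_mul, MvPolynomial.rename_X, MvPolynomial.rename_rename]
          have hcomp : (sigk (k+1)) ∘ Fin.castSucc = Fin.castSucc ∘ (Fin.castSucc (n := k+1)) := by
            funext i
            simp [sigk, Function.comp, (Fin.castSucc_lt_last i).ne]
          rw [hcomp]
          have h1 : sigk (k+1) (Fin.last (k+1)) = Fin.last (k+2) := by simp [sigk]
          rw [h1]
          ring


noncomputable def myPhi (K : Type*) [CommRing K] (k : ℕ) (g : Polynomial K) :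
    MvPolynomial (Fin (k + 1)) K :=
  g.sum fun m c => MvPolynomial.C c * (if k ≤ m then Hh K k (m - k) else 0)

lemma ekey (k m : ℕ) :
    (if k + 1 ≤ m then Hh K (k+1) (m - (k+1)) else 0) *
        (MvPolynomial.X (Fin.castSucc (Fin.last k)) - MvPolynomial.X (Fin.last (k+1))) =
      MvPolynomial.rename Fin.castSucc (if k ≤ m then Hh K k (m - k) else 0)
        - MvPolynomial.rename (sigk k) (if k ≤ m then Hh K k (m - k) else 0) := by
  rcases le_or_gt (k+1) m with h | h
  · rw [if_pos h, if_pos (by omega), Hh_key, show m - (k+1) + 1 = m - k by omega]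
  rcases le_or_gt k m with h2 | h2
  · have : m = k := by omega
    subst this
    rw [if_neg (by omega), if_pos le_rfl, Nat.sub_self, Hh_zero, zero_mul, map_one, map_one,
      sub_self]
  · rw [if_neg (by omega), if_neg (by omega), zero_mul, map_zero, map_zero, sub_self]

lemma myPhi_zero (g : Polynomial K) :
    myPhi K 0 g = Polynomial.aeval (MvPolynomial.X 0) g := by
  rw [Polynomial.aeval_def, Polynomial.eval₂_eq_sum, myPhi, Polynomial.sum, Polynomial.sum]
  apply Finset.sum_congr rfl
  intro m _
  rw [if_pos (Nat.zero_le m), Hh_zero_left, MvPolynomial.algebraMap_eq, Nat.sub_zero]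

lemma isDivDiff_myPhi : IsDivDiff K (myPhi K) := by
  constructor
  · exact myPhi_zero
  · intro k g
    rw [myPhi, myPhi, Polynomial.sum, Polynomial.sum, Finset.sum_mul, map_sum, map_sum,
      ← Finset.sum_sub_distrib]
    apply Finset.sum_congr rfl
    intro m _
    rw [mul_assoc, ekey, map_mul, map_mul, MvPolynomial.rename_C, MvPolynomial.rename_C,
      mul_sub]
    rfl

lemma phi_eq {F : Type*} [Field F] (Φ : ∀ k : ℕ, Polynomial F → MvPolynomial (Fin (k + 1)) F)
    (hΦ : IsDivDiff F Φ) (k : ℕ) (g : Polynomial F) : Φ k g = myPhi F k g := by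
  induction k with
  | zero => rw [hΦ.1, myPhi_zero]
  | succ k ih =>
      have hne : (MvPolynomial.X (Fin.castSucc (Fin.last k))
          - MvPolynomial.X (Fin.last (k+1)) : MvPolynomial (Fin (k+2)) F) ≠ 0 := by
        rw [sub_ne_zero]
        intro h
        have := MvPolynomial.X_injective (R := F) h
        exact absurd this (by simp [Fin.ext_iff])
      apply mul_right_cancel₀ hne
      rw [hΦ.2 k g, isDivDiff_myPhi.2 k g, ih]

def Mb {n : ℕ} (b : Fin n → K) : Matrix (Fin n) (Fin n) K :=
  Matrix.of fun i j => if (j : ℕ) = (i : ℕ) then b i else if (j : ℕ) = (i : ℕ) + 1 then 1 else 0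

lemma sum_mul_Mb {n : ℕ} (b : Fin n → K) (w : Fin n → K) (j : Fin n) :
    ∑ l, w l * Mb b l j =
      w j * b j + if h : 0 < (j : ℕ) then w ⟨(j : ℕ) - 1, by omega⟩ else 0 := by
  have hpt : ∀ l, w l * Mb b l j =
      (if l = j then w l * b j else 0) + (if (l : ℕ) + 1 = (j : ℕ) then w l else 0) := by
    intro l
    simp only [Mb, Matrix.of_apply]
    rcases eq_or_ne ((j : ℕ)) ((l : ℕ)) with h | h
    · obtain rfl : l = j := Fin.ext h.symm
      rw [if_pos h, if_pos rfl, if_neg (by omega)]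
      ring
    · rw [if_neg h, if_neg (fun hc => h (Fin.ext_iff.mp hc).symm)]
      rcases eq_or_ne ((j : ℕ)) ((l : ℕ) + 1) with h2 | h2
      · rw [if_pos h2, if_pos h2.symm]; ring
      · rw [if_neg h2, if_neg (fun hc => h2 hc.symm)]; ring
  simp only [hpt]
  rw [Finset.sum_add_distrib, Finset.sum_ite_eq' Finset.univ j (fun l => w l * b j),
    if_pos (Finset.mem_univ j)]
  congr 1
  split_ifs with h
  · rw [Finset.sum_eq_single (⟨(j : ℕ) - 1, by omega⟩ : Fin n)]
    · exact if_pos (show (j : ℕ) - 1 + 1 = (j : ℕ) by omega)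
    · intro l _ hl
      exact if_neg (fun hc => hl (Fin.ext (show (l : ℕ) = (j : ℕ) - 1 by omega)))
    · simp
  · apply Finset.sum_eq_zero
    intro l _
    rw [if_neg (by omega)]


set_option maxHeartbeats 1000000 in
lemma row_formula {n : ℕ} (hn : 0 < n) (b : Fin n → K) :
    ∀ (m : ℕ) (j : ℕ) (hj : j < n),
    ((Mb b) ^ m) ⟨0, hn⟩ ⟨j, hj⟩ =
      if j ≤ m then
        MvPolynomial.eval (fun t : Fin (j + 1) => b ⟨(t : ℕ), by omega⟩) (Hh K j (m - j))
      else 0 := by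
  intro m
  induction m with
  | zero =>
      intro j hj
      rw [pow_zero, Matrix.one_apply]
      by_cases h : j = 0
      · subst h
        rw [if_pos rfl, if_pos (le_refl 0), Nat.sub_self, Hh_zero, map_one]
      · rw [if_neg (fun hc => h (by simpa [Fin.ext_iff, eq_comm] using hc)),
          if_neg (by omega)]
  | succ m ih =>
      intro j hj
      rw [pow_succ, Matrix.mul_apply, sum_mul_Mb]
      cases j with
      | zero =>
          rw [dif_neg (by simp), ih 0 hj, if_pos (Nat.zero_le m), if_pos (Nat.zero_le (m+1)),
            add_zero, Nat.sub_zero, Nat.sub_zero, Hh_zero_left, Hh_zero_left, map_pow,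
            map_pow, MvPolynomial.eval_X, pow_succ]
          congr 1
      | succ jj =>
          rw [dif_pos (by simp)]
          have hidx : (⟨((⟨jj+1, hj⟩ : Fin n) : ℕ) - 1, by omega⟩ : Fin n)
              = ⟨jj, by omega⟩ := by
            apply Fin.ext; simp
          rw [hidx, ih (jj+1) hj, ih jj (by omega)]
          by_cases h : jj + 1 ≤ m
          · rw [if_pos h, if_pos (by omega), if_pos (by omega),
              show m + 1 - (jj+1) = (m - (jj+1)) + 1 from by omega, Hh_succ_succ,
              show m - jj = m - (jj+1) + 1 from by omega,
              map_add, map_mul, MvPolynomial.eval_X, MvPolynomial.eval_rename]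
            congr 1
            rw [mul_comm]
            congr 1
          · by_cases h2 : jj ≤ m
            · rw [if_neg h, if_pos h2, if_pos (show jj + 1 ≤ m + 1 by omega), zero_mul,
                zero_add]
              have e1 : m - jj = 0 := by omega
              have e2 : m + 1 - (jj + 1) = 0 := by omega
              rw [e1, e2, Hh_zero, Hh_zero, map_one, map_one]
            · rw [if_neg h]
              rw [if_neg h2]
              rw [if_neg (show ¬(jj + 1 ≤ m + 1) by omega)]
              ring

lemma aeval_Mb_entry {n : ℕ} (hn : 0 < n) (b : Fin n → K) (f : Polynomial K)
    (k : ℕ) (hk : k < n) :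
    (Polynomial.aeval (Mb b) f) ⟨0, hn⟩ ⟨k, hk⟩ =
      MvPolynomial.eval (fun t : Fin (k + 1) => b ⟨(t : ℕ), by omega⟩) (myPhi K k f) := by
  rw [Polynomial.aeval_def, Polynomial.eval₂_eq_sum, myPhi, Polynomial.sum, Polynomial.sum,
    map_sum, Matrix.sum_apply]
  apply Finset.sum_congr rfl
  intro m _
  rw [← Algebra.smul_def, Matrix.smul_apply, smul_eq_mul, row_formula hn b m k hk,
    map_mul, MvPolynomial.eval_C, apply_ite (MvPolynomial.eval _), map_zero]

end DivDiffAux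

/-- Let `D` be an integrally closed domain with quotient field `K` and `n`
positive.  Then `Int(Mₙ(D)) ⊆ Int^{n−1}(D)`: every polynomial `f ∈ K[X]` that is
integer-valued on `Mₙ(D)` has all its divided differences `Φᵏ(f)`, `0 ≤ k < n`, integer-valued
on `D^{k+1}`. -/
theorem intOn_univ_subset_divDiff_int (D K : Type*) [CommRing D] [IsDomain D]
    [IsIntegrallyClosed D] [Field K] [Algebra D K] [IsFractionRing D K]
    (Φ : ∀ k : ℕ, Polynomial K → MvPolynomial (Fin (k + 1)) K) (hΦ : IsDivDiff K Φ)
    (n : ℕ) (hn : 0 < n) (f : K[X])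
    (hf : f ∈ IntOn D K (Set.univ : Set (Matrix (Fin n) (Fin n) D))) :
    ∀ k, k < n → ∀ a : Fin (k + 1) → D, ∃ c : D,
      algebraMap D K c =
        MvPolynomial.eval (fun i => algebraMap D K (a i)) (Φ k f) := by
  intro k hk a
  set bD : Fin n → D := fun i =>
    if h : (i : ℕ) < k + 1 then a ⟨(i : ℕ), h⟩ else a (Fin.last k) with hbD
  set MD : Matrix (Fin n) (Fin n) D := Matrix.of fun i j =>
    if (j : ℕ) = (i : ℕ) then bD i else if (j : ℕ) = (i : ℕ) + 1 then 1 else 0 with hMD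
  have hmap : MD.map (algebraMap D K) = Mb (fun i => algebraMap D K (bD i)) := by
    ext i j
    simp only [hMD, Matrix.map_apply, Mb, Matrix.of_apply]
    split_ifs <;> simp
  obtain ⟨c, hc⟩ := hf MD (Set.mem_univ _) ⟨0, hn⟩ ⟨k, hk⟩
  refine ⟨c, ?_⟩
  rw [hc, hmap, aeval_Mb_entry hn _ f k hk, phi_eq Φ hΦ k f]
  have hfun : (fun t : Fin (k + 1) =>
      (algebraMap D K) (bD ⟨(t : ℕ), t.isLt.trans_le hk⟩)) =
      (fun i => (algebraMap D K) (a i)) := by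
    funext t
    simp only [hbD, dif_pos (show ((t : ℕ) < k + 1) from t.isLt), Fin.eta]
  rw [hfun]
end

section
/- Let D be an integrally closed domain with quotient field K, K̄ a fixed algebraic closure of K, and n a positive integer. If f ∈ Int(Mₙ(D)), then for every element α ∈ K̄ that is integral over D and whose minimal polynomial over K has degree at most n, the value f(α) is integral over D. In particular, Int(Mₙ(D)) ⊆ Int_K(D_E) for every finite field extension E of K of degree at most n, where D_E is the integral closure of D in E. -/
open Polynomial

private lemma mulVec_pow_eig {R : Type*} [CommRing R] {n : ℕ} {M : Matrix (Fin n) (Fin n) R}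
    {v : Fin n → R} {a : R} (h : M.mulVec v = a • v) (k : ℕ) :
    (M ^ k).mulVec v = a ^ k • v := by
  induction k with
  | zero => simp [Matrix.one_mulVec]
  | succ k ih =>
    rw [pow_succ, ← Matrix.mulVec_mulVec, h, Matrix.mulVec_smul, ih, smul_smul, pow_succ,
      mul_comm]

private lemma algebraMap_mulVec {K R : Type*} [CommRing K] [CommRing R] [Algebra K R] {n : ℕ}
    (c : K) (v : Fin n → R) :
    (algebraMap K (Matrix (Fin n) (Fin n) R) c).mulVec v = algebraMap K R c • v := by
  rw [Matrix.algebraMap_eq_diagonal]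
  ext i
  simp [Matrix.mulVec_diagonal, Pi.algebraMap_apply, Algebra.smul_def]

private lemma mulVec_aeval_eig {K R : Type*} [CommRing K] [CommRing R] [Algebra K R] {n : ℕ}
    {M : Matrix (Fin n) (Fin n) R} {v : Fin n → R} {a : R} (h : M.mulVec v = a • v)
    (g : K[X]) : (Polynomial.aeval M g).mulVec v = (Polynomial.aeval a g) • v := by
  induction g using Polynomial.induction_on' with
  | add p q hp hq => rw [map_add, Matrix.add_mulVec, hp, hq, map_add, add_smul]
  | monomial k c =>
      rw [aeval_monomial, aeval_monomial, ← Matrix.mulVec_mulVec, mulVec_pow_eig h,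
        Matrix.mulVec_smul, algebraMap_mulVec, mul_smul, smul_comm]

/-- An eigenvalue (over a field) of a matrix with entries from `D` is integral over `D`. -/
private lemma isIntegral_of_eig {D L : Type*} [CommRing D] [Field L] [Algebra D L] {n : ℕ}
    (N : Matrix (Fin n) (Fin n) D) {v : Fin n → L} (hv : v ≠ 0) {b : L}
    (h : (N.map (algebraMap D L)).mulVec v = b • v) : IsIntegral D b := by
  classical
  refine ⟨N.charpoly, N.charpoly_monic, ?_⟩
  rw [← eval_map, ← Matrix.charpoly_map]
  set Nk := N.map (algebraMap D L)
  have hdet : (b • (1 : Matrix (Fin n) (Fin n) L) - Nk).det = 0 := by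
    rw [← Matrix.exists_mulVec_eq_zero_iff]
    refine ⟨v, hv, ?_⟩
    rw [Matrix.sub_mulVec, Matrix.smul_mulVec, Matrix.one_mulVec, h, sub_self]
  have : Nk.charpoly.eval b = (b • (1 : Matrix (Fin n) (Fin n) L) - Nk).det := by
    rw [Matrix.charpoly, ← Polynomial.coe_evalRingHom, RingHom.map_det]
    congr 1
    ext i j
    by_cases hij : i = j
    · subst hij
      simp [Matrix.charmatrix_apply_eq, Matrix.one_apply]
    · simp [Matrix.charmatrix_apply_ne _ _ _ hij, Matrix.one_apply_ne hij]
  rw [this, hdet]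


private lemma key {D K Kbar : Type*} [CommRing D] [IsDomain D] [IsIntegrallyClosed D] [Field K]
    [Algebra D K] [IsFractionRing D K] [Field Kbar] [Algebra K Kbar] [IsAlgClosure K Kbar]
    [Algebra D Kbar] [IsScalarTower D K Kbar] {n : ℕ} (hn : 0 < n) (f : K[X])
    (hf : f ∈ IntOn D K (Set.univ : Set (Matrix (Fin n) (Fin n) D)))
    (α : Kbar) (hα : IsIntegral D α) (hdeg : (minpoly K α).natDegree ≤ n) :
    IsIntegral D (Polynomial.aeval α f) := by
  classical
  set p := minpoly D α with hp
  have hpm : p.Monic := minpoly.monic hα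
  have hdp : p.natDegree ≤ n := by
    have h := minpoly.isIntegrallyClosed_eq_field_fractions K Kbar hα
    rw [Algebra.algebraMap_self, RingHom.id_apply] at h
    rwa [h, hpm.natDegree_map] at hdeg
  set q : D[X] := p * X ^ (n - p.natDegree) with hq
  have hqm : q.Monic := hpm.mul (monic_X_pow _)
  have hqd : q.natDegree = n := by
    rw [hq, hpm.natDegree_mul (monic_X_pow _), natDegree_X_pow]; omega
  have hqα : Polynomial.aeval α q = 0 := by
    rw [hq, _root_.map_mul, hp, minpoly.aeval, zero_mul]
  set M : Matrix (Fin n) (Fin n) D :=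
    Matrix.of (fun i j => if (j : ℕ) = (i : ℕ) + 1 then 1
      else if (i : ℕ) = n - 1 then -(q.coeff (j : ℕ)) else 0) with hM
  set v : Fin n → Kbar := fun j => α ^ (j : ℕ) with hv
  have hv0 : v ≠ 0 := by
    intro h
    have h0 := congrFun h ⟨0, hn⟩
    simp [hv] at h0
  have hsum : ∑ j : Fin n, algebraMap D Kbar (q.coeff (j : ℕ)) * α ^ (j : ℕ) = -α ^ n := by
    have h0 : Polynomial.eval α (q.map (algebraMap D Kbar)) = 0 := by
      rw [eval_map, ← aeval_def, hqα]
    have hd' : (q.map (algebraMap D Kbar)).natDegree = n := by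
      rw [hqm.natDegree_map]; exact hqd
    rw [Polynomial.eval_eq_sum_range, hd', Finset.sum_range_succ] at h0
    have hlead : (q.map (algebraMap D Kbar)).coeff n = 1 := by
      rw [← hd']; exact (hqm.map (algebraMap D Kbar)).coeff_natDegree
    rw [hlead, one_mul] at h0
    have h1 : ∑ i ∈ Finset.range n, algebraMap D Kbar (q.coeff i) * α ^ i = -α ^ n := by
      have := eq_neg_of_add_eq_zero_left h0
      simpa [coeff_map] using this
    rw [Fin.sum_univ_eq_sum_range (fun i => algebraMap D Kbar (q.coeff i) * α ^ i) n]
    exact h1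
  have heig : (M.map (algebraMap D Kbar)).mulVec v = α • v := by
    ext i
    rw [Matrix.mulVec, dotProduct]
    by_cases hi : (i : ℕ) = n - 1
    · have hterm : ∀ j : Fin n, M.map (algebraMap D Kbar) i j * v j
          = -(algebraMap D Kbar (q.coeff (j : ℕ)) * α ^ (j : ℕ)) := by
        intro j
        have hj : ¬ ((j : ℕ) = (i : ℕ) + 1) := by
          have := j.isLt
          omega
        simp only [hM, hv, Matrix.map_apply, Matrix.of_apply, if_neg hj, if_pos hi,
          map_neg, neg_mul]
      rw [Finset.sum_congr rfl (fun j _ => hterm j), Finset.sum_neg_distrib, hsum, neg_neg]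
      have : (i : ℕ) + 1 = n := by omega
      rw [Pi.smul_apply, hv, smul_eq_mul, ← pow_succ', this]
    · have hilt : (i : ℕ) + 1 < n := by
        have := i.isLt
        omega
      rw [Finset.sum_eq_single (⟨(i : ℕ) + 1, hilt⟩ : Fin n)]
      · simp [hM, hv, Matrix.map_apply, pow_succ, mul_comm]
      · intro j _ hj
        have hj' : ¬ ((j : ℕ) = (i : ℕ) + 1) := by
          intro hc
          exact hj (Fin.ext hc)
        simp [hM, hv, Matrix.map_apply, hj', hi]
      · intro h
        exact absurd (Finset.mem_univ _) h
  have hfM := hf M (Set.mem_univ M)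
  choose N hN using hfM
  have htow : M.map (algebraMap D Kbar) = (M.map (algebraMap D K)).map (algebraMap K Kbar) := by
    ext i j
    simp only [Matrix.map_apply]
    exact IsScalarTower.algebraMap_apply D K Kbar _
  have hNmap : (Matrix.of N).map (algebraMap D Kbar)
      = Polynomial.aeval (M.map (algebraMap D Kbar)) f := by
    have h2 : (Polynomial.aeval ((M.map (algebraMap D K)).map (algebraMap K Kbar))) f
        = ((Algebra.ofId K Kbar).mapMatrix (m := Fin n))
            ((Polynomial.aeval (M.map (algebraMap D K))) f) := by
      rw [← Polynomial.aeval_algHom_apply]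
      congr 1
    ext i j
    rw [htow, h2]
    simp only [AlgHom.mapMatrix_apply, Matrix.map_apply, Matrix.of_apply]
    rw [IsScalarTower.algebraMap_apply D K Kbar, hN i j]
    simp [Algebra.ofId_apply]
  have hfin := mulVec_aeval_eig heig f
  rw [← hNmap] at hfin
  exact isIntegral_of_eig (Matrix.of N) hv0 hfin

/-- Let `D` be an integrally closed domain with quotient field `K`, `K̄` a
fixed algebraic closure of `K`, and `n` positive.  If `f ∈ Int(Mₙ(D))`, then for every
`α ∈ K̄` integral over `D` whose minimal polynomial over `K` has degree at most `n`, the value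
`f(α)` is integral over `D`.  In particular `Int(Mₙ(D)) ⊆ Int_K(D_E)` for every finite field
extension `E` of `K` of degree at most `n`, where `D_E` is the integral closure of `D` in `E`. -/
theorem intOn_univ_value_integral (D K Kbar : Type u_1) [CommRing D] [IsDomain D]
    [IsIntegrallyClosed D] [Field K] [Algebra D K] [IsFractionRing D K]
    [Field Kbar] [Algebra K Kbar] [IsAlgClosure K Kbar] [Algebra D Kbar]
    [IsScalarTower D K Kbar]
    (n : ℕ) (hn : 0 < n) (f : K[X])
    (hf : f ∈ IntOn D K (Set.univ : Set (Matrix (Fin n) (Fin n) D))) :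
    (∀ α : Kbar, IsIntegral D α → (minpoly K α).natDegree ≤ n →
      IsIntegral D (Polynomial.aeval α f)) ∧
    (∀ (E : Type u_1) [Field E] [Algebra K E] [Algebra D E] [IsScalarTower D K E],
      FiniteDimensional K E → Module.finrank K E ≤ n →
      ∀ x ∈ integralClosure D E, Polynomial.aeval x f ∈ integralClosure D E) := by
  refine ⟨fun α hα hdeg => key hn f hf α hα hdeg, ?_⟩
  intro E _ _ _ _ hfin hrank x hx
  haveI : Algebra.IsAlgebraic K E := Algebra.IsAlgebraic.of_finite K E
  haveI : IsAlgClosed Kbar := IsAlgClosure.isAlgClosed K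
  let φ : E →ₐ[K] Kbar := IsAlgClosed.lift
  have hinj : Function.Injective φ := φ.toRingHom.injective
  have hx' : IsIntegral D x := hx
  have hφint : IsIntegral D (φ x) := hx'.map (φ.restrictScalars D)
  have hmp : (minpoly K (φ x)).natDegree ≤ n := by
    rw [minpoly.algHom_eq φ hinj]
    exact (minpoly.natDegree_le x).trans hrank
  have h1 : IsIntegral D (Polynomial.aeval (φ x) f) := key hn f hf (φ x) hφint hmp
  rw [Polynomial.aeval_algHom_apply] at h1
  exact (isIntegral_algHom_iff (φ.restrictScalars D) hinj).mp h1
end
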